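/- arXiv:1908.05876 — 13 statements merged into one kernel-verified Lean document; each statement's English description precedes it below -/
import Mathlib

section
/- Let R be a right noetherian ring and let E and F be indecomposable injective right R-modules. Then the following are equivalent: (i) for every finitely generated right R-module A, if Hom(A,E) ≠ 0 then Hom(A,F) ≠ 0; (ii) for every right R-module A, if Hom(A,E) ≠ 0 then Hom(A,F) ≠ 0; (iii) there exists an index set ι and an injective R-linear map from E into the product module F^ι. -/
open MulOpposite

universe u

/-- A module is indecomposable if it is nonzero and is not the internal direct sum of
two nonzero submodules. -/
def IsIndecomposable (R M : Type*) [Ring R] [AddCommGroup M] [Module R M] : Prop :=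
  (∃ x : M, x ≠ 0) ∧
    ∀ A B : Submodule R M, A ⊓ B = ⊥ → A ⊔ B = ⊤ → A = ⊥ ∨ B = ⊥

theorem stmt0 {R : Type u} [Ring R] [IsNoetherian Rᵐᵒᵖ R]
    (E F : Type u) [AddCommGroup E] [Module Rᵐᵒᵖ E] [AddCommGroup F] [Module Rᵐᵒᵖ F]
    (hE : IsIndecomposable Rᵐᵒᵖ E) (hEinj : Module.Injective Rᵐᵒᵖ E)
    (hF : IsIndecomposable Rᵐᵒᵖ F) (hFinj : Module.Injective Rᵐᵒᵖ F) :
    List.TFAE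
      [ ∀ (A : Type u) [AddCommGroup A] [Module Rᵐᵒᵖ A], Module.Finite Rᵐᵒᵖ A →
          (∃ φ : A →ₗ[Rᵐᵒᵖ] E, φ ≠ 0) → (∃ ψ : A →ₗ[Rᵐᵒᵖ] F, ψ ≠ 0),
        ∀ (A : Type u) [AddCommGroup A] [Module Rᵐᵒᵖ A],
          (∃ φ : A →ₗ[Rᵐᵒᵖ] E, φ ≠ 0) → (∃ ψ : A →ₗ[Rᵐᵒᵖ] F, ψ ≠ 0),
        ∃ (ι : Type u) (g : E →ₗ[Rᵐᵒᵖ] (ι → F)), Function.Injective g ] := by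
  tfae_have 2 → 1
  | h, A, _, _, _, hA => h A hA
  tfae_have 1 → 3
  | h => by
    refine ⟨E →ₗ[Rᵐᵒᵖ] F, LinearMap.pi (fun ψ => ψ), ?_⟩
    rw [← LinearMap.ker_eq_bot, Submodule.eq_bot_iff]
    intro e he
    by_contra hne
    -- work with the cyclic submodule spanned by e
    set S : Submodule Rᵐᵒᵖ E := Submodule.span Rᵐᵒᵖ {e} with hS
    have hmem : e ∈ S := Submodule.mem_span_singleton_self e
    have hfin : Module.Finite Rᵐᵒᵖ S :=
      Module.Finite.span_of_finite _ (Set.finite_singleton e)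
    have hφ : ∃ φ : S →ₗ[Rᵐᵒᵖ] E, φ ≠ 0 := by
      refine ⟨S.subtype, ?_⟩
      intro h0
      have : (⟨e, hmem⟩ : S).1 = 0 := congrFun (congrArg DFunLike.coe h0) ⟨e, hmem⟩
      exact hne this
    obtain ⟨ψ₀, hψ₀⟩ := h S hfin hφ
    have hψ₀e : ψ₀ ⟨e, hmem⟩ ≠ 0 := by
      intro h0
      apply hψ₀
      ext ⟨x, hx⟩
      obtain ⟨r, rfl⟩ := Submodule.mem_span_singleton.mp hx
      have : (⟨r • e, hx⟩ : S) = r • ⟨e, hmem⟩ := rfl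
      rw [this, map_smul, h0, smul_zero]
      rfl
    obtain ⟨Ψ, hΨ⟩ := hFinj.out S.subtype S.injective_subtype ψ₀
    have : Ψ e ≠ 0 := by
      have := hΨ ⟨e, hmem⟩
      simp only [Submodule.subtype_apply] at this
      rw [this]
      exact hψ₀e
    exact this (congrFun he Ψ)
  tfae_have 3 → 2
  | ⟨ι, g, hg⟩, A, _, _, ⟨φ, hφ⟩ => by
    obtain ⟨a, ha⟩ : ∃ a, φ a ≠ 0 := by
      by_contra hcon
      push_neg at hcon
      exact hφ (LinearMap.ext hcon)
    have hga : g (φ a) ≠ 0 := fun h0 => ha (hg (h0.trans (map_zero g).symm))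
    obtain ⟨i, hi⟩ : ∃ i, g (φ a) i ≠ 0 := by
      by_contra hcon
      push_neg at hcon
      exact hga (funext hcon)
    refine ⟨(LinearMap.proj i).comp (g.comp φ), ?_⟩
    intro h0
    apply hi
    have := congrFun (congrArg DFunLike.coe h0) a
    simpa using this
  tfae_finish
end

section
/- Let R be a ring, A a uniform right R-module, E an indecomposable injective right R-module, and E' an injective right R-module containing A as an essential submodule (an injective hull of A). If A admits an injective R-linear map into a product of copies of E, then E' admits an injective R-linear map into a product of copies of E; consequently, for every right R-module M, if Hom(M,E') ≠ 0 then Hom(M,E) ≠ 0. -/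
/-!
Extend the embedding `A → ∏ E` to `E' → ∏ E`, using that a product of injective modules is
injective. Its kernel meets the essential submodule `A` trivially, hence is zero. A nonzero map
`M → E'` composed with this embedding is nonzero, so one of its coordinates `M → E` is nonzero.
-/

open MulOpposite

universe u

/-- A submodule is essential if it meets every nonzero submodule nontrivially. -/
def IsEssentialSubmodule {R M : Type*} [Ring R] [AddCommGroup M] [Module R M]
    (A : Submodule R M) : Prop :=
  ∀ N : Submodule R M, N ≠ ⊥ → N ⊓ A ≠ ⊥

section

variable {R : Type*} [Ring R] {M N : Type*} [AddCommGroup M] [Module R M]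
  [AddCommGroup N] [Module R N]

theorem LinearMap.injective_of_injective_comp_subtype {A : Submodule R M}
    (hA : IsEssentialSubmodule A) {f : M →ₗ[R] N} (hf : Function.Injective (f ∘ₗ A.subtype)) :
    Function.Injective f := by
  rw [← LinearMap.ker_eq_bot] at hf ⊢
  by_contra hker
  obtain ⟨a, ⟨hfa, haA⟩, ha⟩ := Submodule.exists_mem_ne_zero_of_ne_bot (hA _ hker)
  have : (⟨a, haA⟩ : A) ∈ LinearMap.ker (f ∘ₗ A.subtype) := hfa
  rw [hf, Submodule.mem_bot] at this
  exact ha (congrArg Subtype.val this)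

theorem exists_proj_comp_ne_zero_of_injective {ι : Type*} {E : Type*} [AddCommGroup E] [Module R E]
    {g : N →ₗ[R] ι → E} (hg : Function.Injective g) {φ : M →ₗ[R] N} (hφ : φ ≠ 0) :
    ∃ i, LinearMap.proj i ∘ₗ g ∘ₗ φ ≠ 0 := by
  by_contra! h
  refine hφ (LinearMap.ext fun m => hg ?_)
  funext i
  simpa using LinearMap.congr_fun (h i) m

end

theorem exists_injective_pi_of_isEssentialSubmodule {R : Type u} [Ring R] {M E : Type u}
    [AddCommGroup M] [Module R M] [AddCommGroup E] [Module R E] [Module.Injective R E]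
    {A : Submodule R M} (hA : IsEssentialSubmodule A) {ι : Type u} {g : A →ₗ[R] ι → E}
    (hg : Function.Injective g) :
    ∃ G : M →ₗ[R] ι → E, Function.Injective G := by
  obtain ⟨G, hG⟩ := Module.Injective.out A.subtype A.injective_subtype g
  refine ⟨G, LinearMap.injective_of_injective_comp_subtype hA ?_⟩
  convert hg using 1
  exact funext hG

theorem stmt1_general {R : Type u} [Ring R]
    {E : Type u} [AddCommGroup E] [Module Rᵐᵒᵖ E]
    (hEinj : Module.Injective Rᵐᵒᵖ E)
    {E' : Type u} [AddCommGroup E'] [Module Rᵐᵒᵖ E']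
    (A : Submodule Rᵐᵒᵖ E')
    -- `A` is essential in `E'`, i.e. `E'` is an injective hull of `A`:
    (hAess : IsEssentialSubmodule A)
    -- `A` embeds in a product of copies of `E`:
    (hembed : ∃ (ι : Type u) (g : A →ₗ[Rᵐᵒᵖ] (ι → E)), Function.Injective g) :
    (∃ (ι : Type u) (g : E' →ₗ[Rᵐᵒᵖ] (ι → E)), Function.Injective g) ∧
      ∀ (M : Type u) [AddCommGroup M] [Module Rᵐᵒᵖ M],
        (∃ φ : M →ₗ[Rᵐᵒᵖ] E', φ ≠ 0) → (∃ ψ : M →ₗ[Rᵐᵒᵖ] E, ψ ≠ 0) := by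
  obtain ⟨ι, g, hg⟩ := hembed
  obtain ⟨G, hG⟩ := exists_injective_pi_of_isEssentialSubmodule hAess hg
  refine ⟨⟨ι, G, hG⟩, fun M _ _ ⟨φ, hφ⟩ => ?_⟩
  obtain ⟨i, hi⟩ := exists_proj_comp_ne_zero_of_injective hG hφ
  exact ⟨_, hi⟩

theorem stmt1 {R : Type u} [Ring R]
    {E : Type u} [AddCommGroup E] [Module Rᵐᵒᵖ E]
    (hEind : IsIndecomposable Rᵐᵒᵖ E) (hEinj : Module.Injective Rᵐᵒᵖ E)
    {E' : Type u} [AddCommGroup E'] [Module Rᵐᵒᵖ E'] (hE'inj : Module.Injective Rᵐᵒᵖ E')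
    (A : Submodule Rᵐᵒᵖ E')
    -- `A` is a uniform module:
    (hAne : A ≠ ⊥)
    (hAuniform : ∀ B C : Submodule Rᵐᵒᵖ E', B ≠ ⊥ → C ≠ ⊥ → B ≤ A → C ≤ A → B ⊓ C ≠ ⊥)
    -- `A` is essential in `E'`, i.e. `E'` is an injective hull of `A`:
    (hAess : IsEssentialSubmodule A)
    -- `A` embeds in a product of copies of `E`:
    (hembed : ∃ (ι : Type u) (g : A →ₗ[Rᵐᵒᵖ] (ι → E)), Function.Injective g) :
    (∃ (ι : Type u) (g : E' →ₗ[Rᵐᵒᵖ] (ι → E)), Function.Injective g) ∧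
      ∀ (M : Type u) [AddCommGroup M] [Module Rᵐᵒᵖ M],
        (∃ φ : M →ₗ[Rᵐᵒᵖ] E', φ ≠ 0) → (∃ ψ : M →ₗ[Rᵐᵒᵖ] E, ψ ≠ 0) :=
  stmt1_general hEinj A hAess hembed
end

section
/- Let R be a ring and let E be an indecomposable injective right R-module possessing a simple submodule S. If F is an indecomposable injective right R-module such that for every right R-module A, Hom(A,E) ≠ 0 implies Hom(A,F) ≠ 0, then E and F are isomorphic. (In the Zariski topology on the injective spectrum, this says that an indecomposable injective with a simple submodule is a closed point.) -/
open MulOpposite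

universe u

section Aux

variable {A : Type u} [Ring A] {M : Type u} [AddCommGroup M] [Module A M]

/-- `S` is essential in `H` (elementwise form). -/
def EssIn (S H : Submodule A M) : Prop :=
  ∀ x ∈ H, x ≠ 0 → ∃ a : A, a • x ∈ S ∧ a • x ≠ 0

lemma exists_maxEss (S : Submodule A M) :
    ∃ H : Submodule A M, (S ≤ H ∧ EssIn S H) ∧
      ∀ W : Submodule A M, (S ≤ W ∧ EssIn S W) → H ≤ W → W = H := by
  obtain ⟨m, -, hm⟩ := zorn_le_nonempty₀ {H : Submodule A M | S ≤ H ∧ EssIn S H}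
    (fun c hcs hchain y hy => by
      refine ⟨sSup c, ⟨le_trans (hcs hy).1 (le_sSup hy), ?_⟩, fun z hz => le_sSup hz⟩
      intro x hx hx0
      rw [Submodule.mem_sSup_of_directed ⟨y, hy⟩ hchain.directedOn] at hx
      obtain ⟨p, hp, hxp⟩ := hx
      exact (hcs hp).2 x hxp hx0) S
    ⟨le_rfl, fun x hx hx0 => ⟨1, by simpa using hx, by simpa using hx0⟩⟩
  exact ⟨m, hm.1, fun W hW hle => le_antisymm (hm.2 hW hle) hle⟩

lemma exists_maxCompl (H : Submodule A M) :
    ∃ K : Submodule A M, Disjoint H K ∧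
      ∀ K' : Submodule A M, Disjoint H K' → K ≤ K' → K' = K := by
  obtain ⟨m, -, hm⟩ := zorn_le_nonempty₀ {K : Submodule A M | Disjoint H K}
    (fun c hcs hchain y hy => by
      refine ⟨sSup c, ?_, fun z hz => le_sSup hz⟩
      show Disjoint H (sSup c)
      rw [Submodule.disjoint_def]
      intro x hxH hxs
      rw [Submodule.mem_sSup_of_directed ⟨y, hy⟩ hchain.directedOn] at hxs
      obtain ⟨p, hp, hxp⟩ := hxs
      exact Submodule.disjoint_def.1 (hcs hp) x hxH hxp) ⊥ disjoint_bot_right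
  exact ⟨m, hm.1, fun K' hK' hle => le_antisymm (hm.2 hK' hle) hle⟩

/-- In an indecomposable injective module, every nonzero submodule is essential. -/
lemma ess_of_indec (inj : Module.Injective A M) (hind : IsIndecomposable A M)
    (S : Submodule A M) (hS : S ≠ ⊥) :
    ∀ x : M, x ≠ 0 → ∃ a : A, a • x ∈ S ∧ a • x ≠ 0 := by
  obtain ⟨H, ⟨hSH, hess⟩, hHmax⟩ := exists_maxEss S
  obtain ⟨K, hdis, hKmax⟩ := exists_maxCompl H
  -- the composite `H → M → M ⧸ K` is injective since `H ⊓ K = ⊥`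
  have hfinj : Function.Injective ((K.mkQ).comp H.subtype) := by
    intro x y hxy
    have h1 : ((x : M) - y) ∈ K := (Submodule.Quotient.eq K).1 hxy
    have h2 : ((x : M) - y) ∈ H := sub_mem x.2 y.2
    have := Submodule.disjoint_def.1 hdis _ h2 h1
    exact Subtype.ext (sub_eq_zero.1 this)
  -- extend the inclusion `H → M` along `H → M ⧸ K` using injectivity of `M`
  obtain ⟨φ, hφ⟩ := inj.out ((K.mkQ).comp H.subtype) hfinj H.subtype
  have hφ' : ∀ x : H, φ (K.mkQ (x : M)) = (x : M) := fun x => hφ x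
  -- the image of `H` in `M ⧸ K` is essential
  have hqess : ∀ z : M ⧸ K, z ≠ 0 →
      ∃ (a : A) (y : M), y ∈ H ∧ K.mkQ y = a • z ∧ a • z ≠ 0 := by
    intro z hz
    obtain ⟨x, rfl⟩ := K.mkQ_surjective z
    have hxK : x ∉ K := fun hxK => hz ((Submodule.Quotient.mk_eq_zero K).2 hxK)
    have hnd : ¬ Disjoint H (K ⊔ Submodule.span A {x}) := by
      intro hd
      have heq := hKmax _ hd le_sup_left
      have hx : x ∈ K ⊔ Submodule.span A {x} :=
        (le_sup_right : Submodule.span A {x} ≤ _) (Submodule.mem_span_singleton_self x)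
      rw [heq] at hx
      exact hxK hx
    rw [Submodule.disjoint_def] at hnd
    push_neg at hnd
    obtain ⟨y, hyH, hyL, hy0⟩ := hnd
    obtain ⟨k, hk, m, hmm, rfl⟩ := Submodule.mem_sup.1 hyL
    obtain ⟨a, rfl⟩ := Submodule.mem_span_singleton.1 hmm
    have hmk : K.mkQ (k + a • x) = a • K.mkQ x := by
      rw [map_add, map_smul]
      rw [show K.mkQ k = 0 from (Submodule.Quotient.mk_eq_zero K).2 hk, zero_add]
    refine ⟨a, k + a • x, hyH, hmk, ?_⟩
    rw [← hmk]
    intro h0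
    have : k + a • x ∈ K := (Submodule.Quotient.mk_eq_zero K).1 h0
    exact hy0 (Submodule.disjoint_def.1 hdis _ hyH this)
  -- `φ` is injective
  have hφ0 : ∀ z : M ⧸ K, φ z = 0 → z = 0 := by
    intro z hz
    by_contra h0
    obtain ⟨a, y, hyH, hmk, hne⟩ := hqess z h0
    have hy : y = φ (a • z) := by rw [← hmk]; exact (hφ' ⟨y, hyH⟩).symm
    rw [map_smul, hz, smul_zero] at hy
    rw [hy] at hmk
    rw [map_zero] at hmk
    exact hne hmk.symm
  -- the range of `φ` is an essential extension of `S` containing `H`, hence equals `H`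
  have hHW : H ≤ LinearMap.range φ := fun x hx => ⟨K.mkQ x, hφ' ⟨x, hx⟩⟩
  have hWH : LinearMap.range φ = H := by
    refine hHmax _ ⟨le_trans hSH hHW, ?_⟩ hHW
    rintro w ⟨z, rfl⟩ hw0
    have hz0 : z ≠ 0 := fun hh => hw0 (by rw [hh, map_zero])
    obtain ⟨a, y, hyH, hmk, hne⟩ := hqess z hz0
    have hay : a • φ z = y := by rw [← map_smul, ← hmk]; exact hφ' ⟨y, hyH⟩
    have hay0 : a • φ z ≠ 0 := by
      rw [← map_smul]
      intro hh
      exact hne (hφ0 _ hh)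
    obtain ⟨b, hbS, hb0⟩ := hess (a • φ z) (hay ▸ hyH) hay0
    exact ⟨b * a, by rwa [mul_smul], by rwa [mul_smul]⟩
  -- the idempotent `π = φ ∘ mkQ` has range `H`; indecomposability forces `H = ⊤`
  set π : M →ₗ[A] M := φ.comp K.mkQ with hπ
  have hπH : ∀ x ∈ H, π x = x := fun x hx => hφ' ⟨x, hx⟩
  have hrange : ∀ x : M, π x ∈ H := fun x => hWH ▸ ⟨K.mkQ x, rfl⟩
  have hker : ∀ x : M, x - π x ∈ LinearMap.ker π := by
    intro x
    rw [LinearMap.mem_ker, map_sub, hπH _ (hrange x), sub_self]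
  have hinf : LinearMap.ker π ⊓ H = ⊥ := by
    rw [eq_bot_iff]
    rintro x ⟨hx1, hx2⟩
    have := hπH x hx2
    rw [LinearMap.mem_ker.1 hx1] at this
    exact this ▸ rfl
  have hsup : LinearMap.ker π ⊔ H = ⊤ := by
    rw [eq_top_iff]
    intro x _
    have : x = (x - π x) + π x := by abel
    rw [this]
    exact Submodule.add_mem_sup (hker x) (hrange x)
  rcases hind.2 _ _ hinf hsup with hk0 | hH0
  · -- kernel is zero, so `π = id` and `H = ⊤`
    intro x hx0
    have hxH : x ∈ H := by
      have := hker x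
      rw [hk0, Submodule.mem_bot, sub_eq_zero] at this
      exact this ▸ hrange x
    exact hess x hxH hx0
  · exact absurd (le_bot_iff.1 (hH0 ▸ hSH)) hS

end Aux

theorem stmt2 {R : Type u} [Ring R]
    {E : Type u} [AddCommGroup E] [Module Rᵐᵒᵖ E]
    (hEind : IsIndecomposable Rᵐᵒᵖ E) (hEinj : Module.Injective Rᵐᵒᵖ E)
    -- `E` possesses a simple submodule `S`:
    (S : Submodule Rᵐᵒᵖ E) (hS : IsAtom S)
    {F : Type u} [AddCommGroup F] [Module Rᵐᵒᵖ F]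
    (hFind : IsIndecomposable Rᵐᵒᵖ F) (hFinj : Module.Injective Rᵐᵒᵖ F)
    (h : ∀ (A : Type u) [AddCommGroup A] [Module Rᵐᵒᵖ A],
      (∃ φ : A →ₗ[Rᵐᵒᵖ] E, φ ≠ 0) → (∃ ψ : A →ₗ[Rᵐᵒᵖ] F, ψ ≠ 0)) :
    Nonempty (E ≃ₗ[Rᵐᵒᵖ] F) := by
  obtain ⟨s₀, hs₀S, hs₀⟩ := Submodule.ne_bot_iff S |>.1 hS.1
  -- a nonzero map `S → F`
  have hsub_ne : S.subtype ≠ 0 := by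
    intro h0
    have := congrArg (fun f => f ⟨s₀, hs₀S⟩) h0
    simpa using hs₀ this
  obtain ⟨ψ, hψ⟩ := h S ⟨S.subtype, hsub_ne⟩
  -- `ψ` is injective since `S` is simple
  have hψ0 : ∀ x : S, ψ x = 0 → x = 0 := by
    intro x hx
    set T : Submodule Rᵐᵒᵖ E := Submodule.map S.subtype (LinearMap.ker ψ) with hT
    have hTS : T ≤ S := Submodule.map_subtype_le S _
    have hTneS : T ≠ S := by
      intro hTeq
      apply hψ
      ext y
      have : (y : E) ∈ T := by rw [hTeq]; exact y.2
      obtain ⟨w, hw, hwy⟩ := this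
      have : w = y := Subtype.ext hwy
      rw [← this]
      exact hw
    have hTbot : T = ⊥ := hS.2 T (lt_of_le_of_ne hTS hTneS)
    have : (x : E) ∈ T := ⟨x, hx, rfl⟩
    rw [hTbot, Submodule.mem_bot] at this
    exact Subtype.ext this
  -- extend `ψ` to `g : E → F`
  obtain ⟨g, hg⟩ := hFinj.out S.subtype S.injective_subtype ψ
  -- `g` is injective: its kernel misses the essential submodule `S`
  have hess := ess_of_indec hEinj hEind S hS.1
  have hg0 : ∀ x : E, g x = 0 → x = 0 := by
    intro x hx
    by_contra hx0
    obtain ⟨a, haS, ha0⟩ := hess x hx0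
    have : g (a • x) = ψ ⟨a • x, haS⟩ := hg ⟨a • x, haS⟩
    rw [map_smul, hx, smul_zero] at this
    have := hψ0 _ this.symm
    exact ha0 (congrArg Subtype.val this)
  have hginj : Function.Injective g := by
    intro x y hxy
    have := hg0 (x - y) (by rw [map_sub, hxy, sub_self])
    exact sub_eq_zero.1 this
  -- split `g` using injectivity of `E`
  obtain ⟨r, hr⟩ := hEinj.out g hginj LinearMap.id
  have hr' : ∀ x : E, r (g x) = x := fun x => hr x
  -- the idempotent `e = g ∘ r` on `F`
  set e : F →ₗ[Rᵐᵒᵖ] F := g.comp r with he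
  have hee : ∀ y : F, e (e y) = e y := by
    intro y
    show g (r (g (r y))) = g (r y)
    rw [hr']
  have hkere : ∀ y : F, y - e y ∈ LinearMap.ker e := by
    intro y
    rw [LinearMap.mem_ker, map_sub, hee, sub_self]
  have hinf : LinearMap.ker e ⊓ LinearMap.range e = ⊥ := by
    rw [eq_bot_iff]
    rintro y ⟨hy1, z, rfl⟩
    rw [Submodule.mem_bot]
    have := LinearMap.mem_ker.1 hy1
    rw [hee] at this
    exact this
  have hsup : LinearMap.ker e ⊔ LinearMap.range e = ⊤ := by
    rw [eq_top_iff]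
    intro y _
    have : y = (y - e y) + e y := by abel
    rw [this]
    exact Submodule.add_mem_sup (hkere y) ⟨y, rfl⟩
  have hrange_ne : LinearMap.range e ≠ ⊥ := by
    intro hbot
    have h1 : e (g s₀) = g s₀ := by show g (r (g s₀)) = g s₀; rw [hr']
    have h2 : g s₀ ∈ LinearMap.range e := ⟨g s₀, h1⟩
    rw [hbot, Submodule.mem_bot] at h2
    exact hs₀ (hg0 s₀ h2)
  have hker_bot : LinearMap.ker e = ⊥ := by
    rcases hFind.2 _ _ hinf hsup with hk | hrk
    · exact hk
    · exact absurd hrk hrange_ne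
  -- `g` is surjective
  have hgsurj : Function.Surjective g := by
    intro y
    have := hkere y
    rw [hker_bot, Submodule.mem_bot, sub_eq_zero] at this
    exact ⟨r y, this.symm⟩
  exact ⟨LinearEquiv.ofBijective g ⟨hginj, hgsurj⟩⟩
end

section
/- Let R be a right noetherian ring and let E be an indecomposable injective right R-module for which there exists a finitely generated right R-module A such that, for every indecomposable injective right R-module F, Hom(A,F) ≠ 0 if and only if F is isomorphic to E. Then E has a simple submodule. -/
open MulOpposite

universe u

/-!
A nonzero map `A → E` exists by hypothesis, so `A ≠ 0` and, being finitely generated, `A` has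
a simple quotient `Q`. Embed `Q` as an atom `S` of an injective module `I`, take `C` maximal
disjoint from `S` and `D ⊇ S` maximal disjoint from `C`. Extending the projection `C ⊕ D → C`
to `I` shows `I = C ⊕ D`, so `D` is injective; and every nonzero submodule of `D` contains `S`,
so `D` is indecomposable. The composite `A → Q → D` is nonzero, hence `D ≅ E`, and the image
of `Q` is a simple submodule of `E`.
-/

section Lattice

variable {α : Type*} [CompleteLattice α]

theorem exists_le_maximal_disjoint [IsCompactlyGenerated α] {a b : α} (h : Disjoint a b) :
    ∃ c, b ≤ c ∧ Maximal (Disjoint a) c :=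
  zorn_le_nonempty₀ {c | Disjoint a c}
    (fun _ hs hchain _ _ => ⟨_, hchain.directedOn.disjoint_sSup_right.2 hs, fun _ => le_sSup⟩)
    b h

theorem eq_bot_of_disjoint_of_maximal_disjoint [IsModularLattice α] {s c d n : α}
    (hc : Maximal (Disjoint s) c) (hcd : Disjoint c d) (hsd : s ≤ d) (hnd : n ≤ d)
    (hsn : Disjoint s n) : n = ⊥ := by
  have hmod : (c ⊔ n) ⊓ d = n := by
    rw [sup_comm, sup_inf_assoc_of_le c hnd, hcd.eq_bot, sup_bot_eq]
  have hs : Disjoint s (c ⊔ n) := by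
    refine disjoint_iff_inf_le.2 ?_
    calc s ⊓ (c ⊔ n) ≤ s ⊓ ((c ⊔ n) ⊓ d) :=
          le_inf inf_le_left (le_inf inf_le_right (inf_le_left.trans hsd))
      _ = s ⊓ n := by rw [hmod]
      _ ≤ ⊥ := hsn.le_bot
  have hnc : n ≤ c := le_sup_right.trans (hc.le_of_ge hs le_sup_left)
  exact (hcd.mono_right hnd).eq_bot_of_ge hnc

end Lattice

section Module

variable {R : Type*} [Ring R] {M : Type*} [AddCommGroup M] [Module R M]

theorem Module.Injective.of_isCompl [Module.Injective R M] {p q : Submodule R M}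
    (h : IsCompl p q) : Module.Injective R p where
  out _ _ _ _ _ _ f hf g := by
    obtain ⟨k, hk⟩ := Module.Injective.out f hf (p.subtype ∘ₗ g)
    exact ⟨p.projectionOnto q h ∘ₗ k, fun x => by simp [hk]⟩

theorem Module.Injective.exists_linearMap_eq_self_on_eq_zero_on [Module.Injective R M]
    {C D : Submodule R M} (h : Disjoint C D) :
    ∃ g : M →ₗ[R] M, (∀ x ∈ C, g x = x) ∧ ∀ x ∈ D, g x = 0 := by
  have hinj : Function.Injective (D.mkQ ∘ₗ C.subtype) := by
    rw [← LinearMap.ker_eq_bot, LinearMap.ker_comp, Submodule.ker_mkQ,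
      ← Submodule.disjoint_iff_comap_eq_bot]
    exact h
  obtain ⟨k, hk⟩ := Module.Injective.out _ hinj C.subtype
  exact ⟨k ∘ₗ D.mkQ, fun x hx => hk ⟨x, hx⟩,
    fun x hx => by simp [(Submodule.Quotient.mk_eq_zero D).2 hx]⟩

theorem Module.Injective.isCompl_of_maximal_disjoint [Module.Injective R M]
    {S C D : Submodule R M} (hC : Maximal (Disjoint S) C) (hD : Maximal (Disjoint C) D) :
    IsCompl C D := by
  obtain ⟨g, hgC, hgD⟩ := exists_linearMap_eq_self_on_eq_zero_on hD.prop
  -- Maximality of `D` pins down `g⁻¹ S`, and then maximality of `C` pins down `range g`.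
  have hcomap : S.comap g = D := by
    refine (hD.eq_of_le ?_ fun x hx => ?_).symm
    · refine Submodule.disjoint_def.2 fun x hxC hxS => ?_
      exact Submodule.disjoint_def.1 hC.prop x (hgC x hxC ▸ hxS) hxC
    · simp [Submodule.mem_comap, hgD x hx]
  have hker : LinearMap.ker g ≤ D := hcomap ▸ Submodule.comap_mono bot_le
  have hrange : LinearMap.range g ≤ C := by
    refine hC.le_of_ge ?_ fun x hx => ⟨x, hgC x hx⟩
    rw [disjoint_iff, inf_comm, ← Submodule.map_comap_eq, hcomap, ← LinearMap.le_ker_iff_map]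
    exact hgD
  refine ⟨hD.prop, Submodule.codisjoint_iff_exists_add_eq.2 fun x => ?_⟩
  refine ⟨g x, x - g x, hrange ⟨x, rfl⟩, hker ?_, add_sub_cancel _ _⟩
  simp [hgC (g x) (hrange ⟨x, rfl⟩)]

theorem isIndecomposable_of_isAtom_le {S D : Submodule R M} (hS : IsAtom S) (hSD : S ≤ D)
    (h : ∀ N ≤ D, N ≠ ⊥ → S ≤ N) : IsIndecomposable R D := by
  obtain ⟨x, hxS, hx0⟩ := Submodule.exists_mem_ne_zero_of_ne_bot hS.1
  refine ⟨⟨⟨x, hSD hxS⟩, by simpa using hx0⟩, fun U V hUV _ => ?_⟩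
  by_contra! hne
  have hle : S ≤ (U ⊓ V).map D.subtype := by
    rw [Submodule.map_inf _ D.injective_subtype]
    have hmap (N : Submodule R D) (hN : N ≠ ⊥) : N.map D.subtype ≠ ⊥ := by
      simpa using (Submodule.map_injective_of_injective D.injective_subtype).ne hN
    exact le_inf (h _ (Submodule.map_subtype_le _ _) (hmap U hne.1))
      (h _ (Submodule.map_subtype_le _ _) (hmap V hne.2))
  rw [hUV, Submodule.map_bot] at hle
  exact hS.1 (le_bot_iff.1 hle)

theorem Module.Injective.exists_isIndecomposable_of_isAtom [Module.Injective R M]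
    {S : Submodule R M} (hS : IsAtom S) :
    ∃ D : Submodule R M, S ≤ D ∧ Module.Injective R D ∧ IsIndecomposable R D := by
  obtain ⟨C, -, hC⟩ := exists_le_maximal_disjoint (disjoint_bot_right : Disjoint S ⊥)
  obtain ⟨D, hSD, hD⟩ := exists_le_maximal_disjoint hC.prop.symm
  refine ⟨D, hSD, .of_isCompl (isCompl_of_maximal_disjoint hC hD).symm,
    isIndecomposable_of_isAtom_le hS hSD fun N hND hN => ?_⟩
  exact hS.not_disjoint_iff_le.1 fun hSN =>
    hN (eq_bot_of_disjoint_of_maximal_disjoint hC hD.prop hSD hND hSN)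

end Module

theorem isAtom_range_of_injective {R Q M : Type*} [Ring R] [AddCommGroup Q] [Module R Q]
    [IsSimpleModule R Q] [AddCommGroup M] [Module R M] {f : Q →ₗ[R] M}
    (hf : Function.Injective f) : IsAtom (LinearMap.range f) :=
  isSimpleModule_iff_isAtom.1 (IsSimpleModule.congr (LinearEquiv.ofInjective f hf).symm)

theorem IsSimpleModule.exists_injective_isIndecomposable {R : Type u} [Ring R] (Q : Type u)
    [AddCommGroup Q] [Module R Q] [IsSimpleModule R Q] :
    ∃ D : ModuleCat.{u} R, Module.Injective R D ∧ IsIndecomposable R D ∧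
      ∃ f : Q →ₗ[R] D, Function.Injective f := by
  let I := CategoryTheory.Injective.under (ModuleCat.of R Q)
  let ι : ModuleCat.of R Q ⟶ I := CategoryTheory.Injective.ι _
  have : Module.Injective R I :=
    (Module.injective_iff_injective_object R I).2 (inferInstanceAs (CategoryTheory.Injective I))
  have hι : Function.Injective ι.hom := (ModuleCat.mono_iff_injective ι).1 inferInstance
  obtain ⟨D, hιD, hDinj, hDind⟩ :=
    Module.Injective.exists_isIndecomposable_of_isAtom (isAtom_range_of_injective hι)
  exact ⟨.of R D, hDinj, hDind, ι.hom.codRestrict D fun q => hιD ⟨q, rfl⟩,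
    fun _ _ h => hι (congrArg Subtype.val h)⟩

theorem stmt3_general {R : Type u} [Ring R]
    {E : Type u} [AddCommGroup E] [Module Rᵐᵒᵖ E]
    (hEind : IsIndecomposable Rᵐᵒᵖ E) (hEinj : Module.Injective Rᵐᵒᵖ E)
    (A : Type u) [AddCommGroup A] [Module Rᵐᵒᵖ A] (hAfg : Module.Finite Rᵐᵒᵖ A)
    (hA : ∀ (F : Type u) [AddCommGroup F] [Module Rᵐᵒᵖ F],
      IsIndecomposable Rᵐᵒᵖ F → Module.Injective Rᵐᵒᵖ F →
        ((∃ φ : A →ₗ[Rᵐᵒᵖ] F, φ ≠ 0) ↔ Nonempty (F ≃ₗ[Rᵐᵒᵖ] E))) :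
    ∃ S : Submodule Rᵐᵒᵖ E, IsAtom S := by
  obtain ⟨φ, hφ⟩ := (hA E hEind hEinj).2 ⟨LinearEquiv.refl _ E⟩
  have : Nontrivial A := by
    obtain ⟨a, ha⟩ := DFunLike.ne_iff.1 hφ
    exact nontrivial_of_ne a 0 fun h => ha (by simp [h])
  obtain ⟨U, hU⟩ := IsCoatomic.exists_coatom (α := Submodule Rᵐᵒᵖ A)
  have := isSimpleModule_iff_isCoatom.2 hU
  obtain ⟨D, hDinj, hDind, f, hf⟩ :=
    IsSimpleModule.exists_injective_isIndecomposable (R := Rᵐᵒᵖ) (A ⧸ U)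
  have hfU : f ∘ₗ U.mkQ ≠ 0 := by
    have := IsSimpleModule.nontrivial Rᵐᵒᵖ (A ⧸ U)
    obtain ⟨q, hq⟩ := exists_ne (0 : A ⧸ U)
    obtain ⟨a, rfl⟩ := U.mkQ_surjective q
    exact fun h => hq (hf (by simpa using LinearMap.congr_fun h a))
  obtain ⟨e⟩ := (hA D hDind hDinj).1 ⟨_, hfU⟩
  exact ⟨_, isAtom_range_of_injective (f := e.toLinearMap ∘ₗ f) (e.injective.comp hf)⟩

theorem stmt3 {R : Type u} [Ring R] [IsNoetherian Rᵐᵒᵖ R]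
    {E : Type u} [AddCommGroup E] [Module Rᵐᵒᵖ E]
    (hEind : IsIndecomposable Rᵐᵒᵖ E) (hEinj : Module.Injective Rᵐᵒᵖ E)
    (A : Type u) [AddCommGroup A] [Module Rᵐᵒᵖ A] (hAfg : Module.Finite Rᵐᵒᵖ A)
    (hA : ∀ (F : Type u) [AddCommGroup F] [Module Rᵐᵒᵖ F],
      IsIndecomposable Rᵐᵒᵖ F → Module.Injective Rᵐᵒᵖ F →
        ((∃ φ : A →ₗ[Rᵐᵒᵖ] F, φ ≠ 0) ↔ Nonempty (F ≃ₗ[Rᵐᵒᵖ] E))) :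
    ∃ S : Submodule Rᵐᵒᵖ E, IsAtom S :=
  stmt3_general hEind hEinj A hAfg hA
end

section
/- Let f : R → S be a homomorphism of rings which is an epimorphism in the category of rings (i.e., for all ring homomorphisms g, h : S → T, g ∘ f = h ∘ f implies g = h), and suppose S is flat as a left R-module (via f). If E is an indecomposable injective right S-module, then E, regarded as a right R-module by restriction of scalars along f, is an indecomposable injective right R-module. -/
/-!
Indecomposability: since `f` is an epimorphism, every `R`-linear map between `S`-modules is
`S`-linear (compare right multiplication on `E × F` with its conjugate by the unipotent
`(x, y) ↦ (x, y + φ x)`). In particular the projections onto the summands of an `R`-decomposition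
of `E` are `S`-linear, so the summands are `S`-submodules.

Injectivity, via Baer's criterion: given a right ideal `I` of `R` and `g : I → E`, the
`S`-submodule of `S × E` spanned by the pairs `(f i, g i)` is the graph of an `S`-linear map
`f(I) S → E`. Testing against characters `χ` of `E`, this reduces to extending
`i ↦ (s ↦ χ (g i · s))` from `I` to `R`, which is possible because the character module of `S` is
injective. Injectivity of `E` over `S` extends the graph map to `S`, and evaluating at `1` gives
the extension of `g`.
-/

open MulOpposite

universe u

/-- Scalar action of `Rᵐᵒᵖ` on the character module `Hom_ℤ(N, ℚ/ℤ)` of a left `R`-module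
`N`, given by `(f • r) (n) = f (r • n)`. -/
instance charSMul (R N : Type*) [Ring R] [AddCommGroup N] [Module R N] :
    SMul Rᵐᵒᵖ (N →+ AddCircle (1 : ℚ)) where
  smul r f :=
    { toFun := fun n => f (r.unop • n)
      map_zero' := by simp
      map_add' := fun a b => by simp [smul_add] }

lemma charSMul_apply {R N : Type*} [Ring R] [AddCommGroup N] [Module R N]
    (r : Rᵐᵒᵖ) (f : N →+ AddCircle (1 : ℚ)) (n : N) : (r • f) n = f (r.unop • n) := rfl

/-- The right `R`-module structure on the character module `Hom_ℤ(N, ℚ/ℤ)` of a left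
`R`-module `N`. -/
instance charModuleOpModule (R N : Type*) [Ring R] [AddCommGroup N]
    [Module R N] : Module Rᵐᵒᵖ (N →+ AddCircle (1 : ℚ)) where
  one_smul f := by ext n; simp [charSMul_apply]
  mul_smul r s f := by ext n; simp [charSMul_apply, mul_smul]
  smul_zero r := by ext n; simp [charSMul_apply]
  smul_add r f g := by ext n; simp [charSMul_apply]
  add_smul r s f := by ext n; simp [charSMul_apply, add_smul]
  zero_smul f := by ext n; simp [charSMul_apply]

/-- **Lambek's criterion**: a left `R`-module `N` is flat iff its character module
`Hom_ℤ(N, ℚ/ℤ)` is an injective right `R`-module. -/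
def IsFlatLeftModule (R N : Type*) [Ring R] [AddCommGroup N] [Module R N] : Prop :=
  Module.Injective Rᵐᵒᵖ (N →+ AddCircle (1 : ℚ))

def rightActionHom (S M : Type*) [Ring S] [AddCommGroup M] [Module Sᵐᵒᵖ M] :
    S →+* (AddMonoid.End M)ᵐᵒᵖ :=
  (Module.toAddMonoidEnd Sᵐᵒᵖ M).op.comp (RingEquiv.opOp S).toRingHom

def offDiag {E F : Type*} [AddCommGroup E] [AddCommGroup F] (φ : E →+ F) :
    AddMonoid.End (E × F) :=
  (AddMonoidHom.inr E F).comp (φ.comp (AddMonoidHom.fst E F))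

lemma offDiag_apply {E F : Type*} [AddCommGroup E] [AddCommGroup F] (φ : E →+ F) (p : E × F) :
    offDiag φ p = (0, φ p.1) := rfl

lemma isNilpotent_offDiag {E F : Type*} [AddCommGroup E] [AddCommGroup F] (φ : E →+ F) :
    IsNilpotent (offDiag φ) :=
  ⟨2, by ext <;> simp [pow_two, AddMonoid.End.coe_mul, offDiag_apply]⟩

lemma commute_one_add_offDiag_iff {A E F : Type*} [Semiring A] [AddCommGroup E] [AddCommGroup F]
    [Module A E] [Module A F] (φ : E →+ F) (a : A) :
    Commute (1 + offDiag φ) (Module.toAddMonoidEnd A (E × F) a) ↔ ∀ x, φ (a • x) = a • φ x := by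
  have hN : Commute (1 + offDiag φ) (Module.toAddMonoidEnd A (E × F) a) ↔
      Commute (offDiag φ) (Module.toAddMonoidEnd A (E × F) a) :=
    ⟨fun h => by simpa using h.sub_left (Commute.one_left _), (Commute.one_left _).add_left⟩
  have hact (p : E × F) : Module.toAddMonoidEnd A (E × F) a p = a • p := rfl
  rw [hN, commute_iff_eq, DFunLike.ext_iff]
  simp [AddMonoid.End.coe_mul, offDiag_apply, hact, Prod.ext_iff]

def Submodule.ofSMulMem {A B M : Type*} [Semiring A] [Semiring B] [AddCommMonoid M]
    [Module A M] [Module B M] (N : Submodule A M) (hN : ∀ (b : B) (x : M), x ∈ N → b • x ∈ N) :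
    Submodule B M where
  toAddSubmonoid := N.toAddSubmonoid
  smul_mem' := hN

@[simp]
lemma Submodule.mem_ofSMulMem {A B M : Type*} [Semiring A] [Semiring B] [AddCommMonoid M]
    [Module A M] [Module B M] {N : Submodule A M} {hN : ∀ (b : B) (x : M), x ∈ N → b • x ∈ N}
    {x : M} : x ∈ N.ofSMulMem hN ↔ x ∈ N :=
  Iff.rfl

section Epimorphism

variable {R S : Type u} [Ring R] [Ring S] {f : R →+* S}

/-- Conjugation by `u` is a ring endomorphism agreeing with the identity on the image of `f`, so
it is the identity on the image of `h`. -/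
theorem commute_of_forall_commute_comp
    (hepi : ∀ (T : Type u) [Ring T] (g h : S →+* T), g.comp f = h.comp f → g = h)
    {T : Type u} [Ring T] (h : S →+* T) {u : T} (hu : IsUnit u)
    (hcomm : ∀ r, Commute u (h (f r))) (s : S) : Commute u (h s) := by
  let conj : T →+* T := MulSemiringAction.toRingHom (ConjAct Tˣ) T (ConjAct.toConjAct hu.unit)
  have conj_apply : ∀ x, conj x = u * x * ↑hu.unit⁻¹ := fun x => ConjAct.units_smul_def _ _
  have conj_eq_iff : ∀ x, conj x = x ↔ Commute u x := fun x => by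
    rw [conj_apply, Units.mul_inv_eq_iff_eq_mul, IsUnit.unit_spec]; rfl
  have hfix : (conj.comp h).comp f = h.comp f := by
    ext r
    exact (conj_eq_iff _).2 (hcomm r)
  exact (conj_eq_iff _).1 congr($(hepi T _ _ hfix) s)

theorem map_smul_of_epi
    (hepi : ∀ (T : Type u) [Ring T] (g h : S →+* T), g.comp f = h.comp f → g = h)
    {E F : Type u} [AddCommGroup E] [Module Sᵐᵒᵖ E] [Module Rᵐᵒᵖ E]
    [AddCommGroup F] [Module Sᵐᵒᵖ F] [Module Rᵐᵒᵖ F]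
    (hresE : ∀ (r : R) (x : E), (op r : Rᵐᵒᵖ) • x = (op (f r) : Sᵐᵒᵖ) • x)
    (hresF : ∀ (r : R) (y : F), (op r : Rᵐᵒᵖ) • y = (op (f r) : Sᵐᵒᵖ) • y)
    (φ : E →ₗ[Rᵐᵒᵖ] F) (s : Sᵐᵒᵖ) (x : E) : φ (s • x) = s • φ x := by
  have hcomm := commute_of_forall_commute_comp hepi (rightActionHom S (E × F))
    (isNilpotent_offDiag φ.toAddMonoidHom).isUnit_one_add.op
    (fun r => Commute.op <| (commute_one_add_offDiag_iff _ _).2 fun x => by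
      simp [← hresE, ← hresF]) s.unop
  exact (commute_one_add_offDiag_iff _ _).1 hcomm.unop x

theorem smul_mem_of_isCompl
    (hepi : ∀ (T : Type u) [Ring T] (g h : S →+* T), g.comp f = h.comp f → g = h)
    {E : Type u} [AddCommGroup E] [Module Sᵐᵒᵖ E] [Module Rᵐᵒᵖ E]
    (hres : ∀ (r : R) (x : E), (op r : Rᵐᵒᵖ) • x = (op (f r) : Sᵐᵒᵖ) • x)
    {A B : Submodule Rᵐᵒᵖ E} (hAB : IsCompl A B) (s : Sᵐᵒᵖ) (x : E) (hx : x ∈ A) :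
    s • x ∈ A := by
  have hπ : A.projection B hAB x = x := A.projection_apply_left hAB ⟨x, hx⟩
  rw [← hπ, ← map_smul_of_epi hepi hres hres]
  exact A.projection_apply_mem hAB _

theorem isIndecomposable_of_epi
    (hepi : ∀ (T : Type u) [Ring T] (g h : S →+* T), g.comp f = h.comp f → g = h)
    {E : Type u} [AddCommGroup E] [Module Sᵐᵒᵖ E] [Module Rᵐᵒᵖ E]
    (hres : ∀ (r : R) (x : E), (op r : Rᵐᵒᵖ) • x = (op (f r) : Sᵐᵒᵖ) • x)
    (hE : IsIndecomposable Sᵐᵒᵖ E) : IsIndecomposable Rᵐᵒᵖ E := by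
  refine ⟨hE.1, fun A B hinf hsup => ?_⟩
  have hAB : IsCompl A B := ⟨disjoint_iff.2 hinf, codisjoint_iff.2 hsup⟩
  let A' := A.ofSMulMem (smul_mem_of_isCompl hepi hres hAB)
  let B' := B.ofSMulMem (smul_mem_of_isCompl hepi hres hAB.symm)
  have hdisj : Disjoint A' B' :=
    Submodule.disjoint_def.2 fun x => Submodule.disjoint_def.1 hAB.disjoint x
  have hcodisj : Codisjoint A' B' :=
    Submodule.codisjoint_iff_exists_add_eq.2 fun z =>
      Submodule.codisjoint_iff_exists_add_eq.1 hAB.codisjoint z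
  refine (hE.2 A' B' (disjoint_iff.1 hdisj) (codisjoint_iff.1 hcodisj)).imp ?_ ?_ <;>
    · simp [Submodule.eq_bot_iff, A', B']

end Epimorphism

def charPairing {S E : Type*} [Ring S] [AddCommGroup E] [Module Sᵐᵒᵖ E]
    (χ : E →+ AddCircle (1 : ℚ)) : E →ₗ[Sᵐᵒᵖ] (S →+ AddCircle (1 : ℚ)) where
  toFun y :=
    { toFun := fun s => χ (op s • y)
      map_zero' := by simp
      map_add' := fun a b => by simp [add_smul] }
  map_add' y z := by ext s; simp [smul_add]
  map_smul' t y := by ext s; simp [charSMul_apply, mul_smul]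

@[simp]
lemma charPairing_apply {S E : Type*} [Ring S] [AddCommGroup E] [Module Sᵐᵒᵖ E]
    (χ : E →+ AddCircle (1 : ℚ)) (y : E) (s : S) : charPairing χ y s = χ (op s • y) :=
  rfl

section FlatRestriction

variable {R S : Type u} [Ring R] [Ring S] {f : R →+* S} [Module R S]
  {E : Type u} [AddCommGroup E] [Module Sᵐᵒᵖ E] [Module Rᵐᵒᵖ E]

lemma char_smul_eq_of_restrict (hsmul : ∀ (r : R) (s : S), r • s = f r * s) (r : Rᵐᵒᵖ)
    (ψ : S →+ AddCircle (1 : ℚ)) : r • ψ = (op (f r.unop) : Sᵐᵒᵖ) • ψ := by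
  ext s
  simp [charSMul_apply, hsmul]

def charPairingRestrict (hsmul : ∀ (r : R) (s : S), r • s = f r * s)
    (hres : ∀ (r : R) (x : E), (op r : Rᵐᵒᵖ) • x = (op (f r) : Sᵐᵒᵖ) • x)
    (χ : E →+ AddCircle (1 : ℚ)) : E →ₗ[Rᵐᵒᵖ] (S →+ AddCircle (1 : ℚ)) where
  toFun := charPairing χ
  map_add' := map_add _
  map_smul' r y := by
    rw [RingHom.id_apply, char_smul_eq_of_restrict hsmul, ← map_smul, ← hres, op_unop]

/-- Injectivity of the character module of `S` extends `charPairing χ ∘ₗ g` from `I` to `Rᵐᵒᵖ`;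
`ψ` is the value of the extension at `1`. -/
lemma exists_charPairing_eq_smul (hsmul : ∀ (r : R) (s : S), r • s = f r * s)
    (hres : ∀ (r : R) (x : E), (op r : Rᵐᵒᵖ) • x = (op (f r) : Sᵐᵒᵖ) • x)
    (hflat : IsFlatLeftModule R S) (I : Ideal Rᵐᵒᵖ) (g : I →ₗ[Rᵐᵒᵖ] E)
    (χ : E →+ AddCircle (1 : ℚ)) :
    ∃ ψ : S →+ AddCircle (1 : ℚ),
      ∀ i : I, charPairing χ (g i) = (op (f (i : Rᵐᵒᵖ).unop) : Sᵐᵒᵖ) • ψ := by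
  obtain ⟨Ψ, hΨ⟩ := Module.Baer.of_injective hflat I (charPairingRestrict hsmul hres χ ∘ₗ g)
  refine ⟨Ψ 1, fun ⟨i, hi⟩ => ?_⟩
  rw [← char_smul_eq_of_restrict hsmul, ← map_smul, smul_eq_mul, mul_one, hΨ i hi]
  rfl

def extensionGraph (f : R →+* S) (I : Ideal Rᵐᵒᵖ) (g : I →ₗ[Rᵐᵒᵖ] E) :
    Submodule Sᵐᵒᵖ (Sᵐᵒᵖ × E) :=
  Submodule.span Sᵐᵒᵖ (Set.range fun i : I => (op (f (i : Rᵐᵒᵖ).unop), g i))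

/-- Both sides of `charPairing χ p.2 = p.1 • ψ` are `Sᵐᵒᵖ`-linear in `p` and agree on the
generators of `extensionGraph f I g`. -/
lemma snd_eq_zero_of_mem_extensionGraph (hsmul : ∀ (r : R) (s : S), r • s = f r * s)
    (hres : ∀ (r : R) (x : E), (op r : Rᵐᵒᵖ) • x = (op (f r) : Sᵐᵒᵖ) • x)
    (hflat : IsFlatLeftModule R S) {I : Ideal Rᵐᵒᵖ} {g : I →ₗ[Rᵐᵒᵖ] E}
    {p : Sᵐᵒᵖ × E} (hp : p ∈ extensionGraph f I g) (hp₁ : p.1 = 0) : p.2 = 0 := by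
  refine CharacterModule.eq_zero_of_character_apply fun (χ : E →+ AddCircle (1 : ℚ)) => ?_
  obtain ⟨ψ, hψ⟩ := exists_charPairing_eq_smul hsmul hres hflat I g χ
  have hle : extensionGraph f I g ≤ LinearMap.eqLocus
      (charPairing χ ∘ₗ LinearMap.snd Sᵐᵒᵖ Sᵐᵒᵖ E)
      (LinearMap.toSpanSingleton Sᵐᵒᵖ _ ψ ∘ₗ LinearMap.fst Sᵐᵒᵖ Sᵐᵒᵖ E) := by
    rw [extensionGraph, Submodule.span_le]
    rintro _ ⟨i, rfl⟩
    exact hψ i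
  have h1 : charPairing χ p.2 (1 : S) = (p.1 • ψ) 1 := congr($(hle hp) 1)
  simp only [hp₁, charPairing_apply, op_one, one_smul, charSMul_apply, unop_zero, zero_smul,
    map_zero] at h1
  exact h1

theorem baer_of_flat (hsmul : ∀ (r : R) (s : S), r • s = f r * s)
    (hres : ∀ (r : R) (x : E), (op r : Rᵐᵒᵖ) • x = (op (f r) : Sᵐᵒᵖ) • x)
    (hflat : IsFlatLeftModule R S) (hEinj : Module.Injective Sᵐᵒᵖ E) :
    Module.Baer Rᵐᵒᵖ E := by
  intro I g
  let Γ := extensionGraph f I g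
  have hinj : Function.Injective (LinearMap.fst Sᵐᵒᵖ Sᵐᵒᵖ E ∘ₗ Γ.subtype) := by
    refine (injective_iff_map_eq_zero _).2 fun p hp => Subtype.ext (Prod.ext hp ?_)
    exact snd_eq_zero_of_mem_extensionGraph hsmul hres hflat p.2 hp
  obtain ⟨h, hh⟩ := hEinj.out _ hinj (LinearMap.snd Sᵐᵒᵖ Sᵐᵒᵖ E ∘ₗ Γ.subtype)
  refine ⟨LinearMap.toSpanSingleton Rᵐᵒᵖ E (h 1), fun x hx => ?_⟩
  have hmem : (op (f x.unop), g ⟨x, hx⟩) ∈ Γ := Submodule.subset_span ⟨⟨x, hx⟩, rfl⟩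
  calc x • h 1 = (op (f x.unop) : Sᵐᵒᵖ) • h 1 := by rw [← hres, op_unop]
    _ = h (op (f x.unop)) := by rw [← map_smul, smul_eq_mul, mul_one]
    _ = g ⟨x, hx⟩ := hh ⟨_, hmem⟩

end FlatRestriction

theorem stmt5 {R S : Type u} [Ring R] [Ring S] (f : R →+* S)
    -- `f` is an epimorphism in the category of rings:
    (hepi : ∀ (T : Type u) [Ring T] (g h : S →+* T), g.comp f = h.comp f → g = h)
    -- `S` is flat as a left `R`-module via `f` (the action being `r • s = f r * s`):
    [Module R S] (hsmul : ∀ (r : R) (s : S), r • s = f r * s)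
    (hflat : IsFlatLeftModule R S)
    -- `E` is an indecomposable injective right `S`-module:
    {E : Type u} [AddCommGroup E] [Module Sᵐᵒᵖ E]
    (hEind : IsIndecomposable Sᵐᵒᵖ E) (hEinj : Module.Injective Sᵐᵒᵖ E)
    -- the right `R`-module structure on `E` obtained by restriction of scalars along `f`:
    [Module Rᵐᵒᵖ E] (hres : ∀ (r : R) (x : E), (op r : Rᵐᵒᵖ) • x = (op (f r) : Sᵐᵒᵖ) • x) :
    IsIndecomposable Rᵐᵒᵖ E ∧ Module.Injective Rᵐᵒᵖ E :=
  ⟨isIndecomposable_of_epi hepi hres hEind, (baer_of_flat hsmul hres hflat hEinj).injective⟩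
end

section
/- Let R be a right noetherian ring, z a central element of R, E an indecomposable injective right R-module, and F a nonzero submodule of E with Fz = 0 (in the paper, F is an indecomposable injective module over R/I restricted to R and z ∈ I is a central element of a two-sided ideal I annihilating F). Then for every x ∈ E there exists a natural number n such that x·zⁿ = 0. -/
open MulOpposite

universe u

/-- An indecomposable injective module is uniform. -/
lemma uniform_aux {S M : Type u} [Ring S] [AddCommGroup M] [Module S M]
    (hind : IsIndecomposable S M) (hinj : Module.Injective S M)
    {A B : Submodule S M} (hA : A ≠ ⊥) (hB : B ≠ ⊥) (hAB : A ⊓ B = ⊥) : False := by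
  classical
  -- C : maximal submodule containing B with A ⊓ C = ⊥
  obtain ⟨C, hBC, hCmem, hCmax⟩ :
      ∃ C, B ≤ C ∧ (A ⊓ C = ⊥ ∧ B ≤ C) ∧
        ∀ C', (A ⊓ C' = ⊥ ∧ B ≤ C') → C ≤ C' → C' ≤ C := by
    obtain ⟨C, hBC, hmax⟩ := zorn_le_nonempty₀ {C : Submodule S M | A ⊓ C = ⊥ ∧ B ≤ C}
      (fun c hc hchain y hy => by
        refine ⟨sSup c, ⟨?_, (hc hy).2.trans (le_sSup hy)⟩, fun z hz => le_sSup hz⟩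
        rw [eq_bot_iff]
        rintro w ⟨hwA, hwC⟩
        obtain ⟨P, hPc, hwP⟩ :=
          (Submodule.mem_sSup_of_directed ⟨y, hy⟩ hchain.directedOn).1 hwC
        have := (hc hPc).1
        rw [eq_bot_iff] at this
        exact this ⟨hwA, hwP⟩) B ⟨hAB, le_rfl⟩
    exact ⟨C, hBC, hmax.prop, fun C' h1 h2 => hmax.2 h1 h2⟩
  -- D : maximal submodule containing A with D ⊓ C = ⊥
  obtain ⟨D, hAD, hDmem, hDmax⟩ :
      ∃ D, A ≤ D ∧ (A ≤ D ∧ D ⊓ C = ⊥) ∧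
        ∀ D', (A ≤ D' ∧ D' ⊓ C = ⊥) → D ≤ D' → D' ≤ D := by
    obtain ⟨D, hAD, hmax⟩ := zorn_le_nonempty₀ {D : Submodule S M | A ≤ D ∧ D ⊓ C = ⊥}
      (fun c hc hchain y hy => by
        refine ⟨sSup c, ⟨(hc hy).1.trans (le_sSup hy), ?_⟩, fun z hz => le_sSup hz⟩
        rw [eq_bot_iff]
        rintro w ⟨hwD, hwC⟩
        obtain ⟨P, hPc, hwP⟩ :=
          (Submodule.mem_sSup_of_directed ⟨y, hy⟩ hchain.directedOn).1 hwD
        have := (hc hPc).2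
        rw [eq_bot_iff] at this
        exact this ⟨hwP, hwC⟩) A
      ⟨le_rfl, hCmem.1⟩
    exact ⟨D, hAD, hmax.prop, fun D' h1 h2 => hmax.2 h1 h2⟩
  have hAC : A ⊓ C = ⊥ := hCmem.1
  have hDC : D ⊓ C = ⊥ := hDmem.2
  -- key maximality fact for C
  have hMC : ∀ w : M, w ∉ C → A ⊓ (C ⊔ Submodule.span S {w}) ≠ ⊥ := by
    intro w hw hbot
    have h1 : C ≤ C ⊔ Submodule.span S {w} := le_sup_left
    have h2 := hCmax _ ⟨hbot, hBC.trans h1⟩ h1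
    exact hw (h2 (Submodule.mem_sup_right (Submodule.mem_span_singleton_self w)))
  set W := C ⊔ D with hW
  set C' : Submodule S W := C.comap W.subtype with hC'
  set D' : Submodule S W := D.comap W.subtype with hD'
  have hcompl : IsCompl C' D' := by
    constructor
    · rw [disjoint_iff, eq_bot_iff]
      rintro x hx
      rw [Submodule.mem_inf] at hx
      have hx2 : (x : M) ∈ D ⊓ C := ⟨hx.2, hx.1⟩
      rw [hDC, Submodule.mem_bot] at hx2
      exact Submodule.mem_bot _ |>.2 (Subtype.ext hx2)
    · rw [codisjoint_iff, eq_top_iff]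
      rintro ⟨v, hv⟩ -
      obtain ⟨c, hc, d, hd, hcd⟩ := Submodule.mem_sup.1 hv
      refine Submodule.mem_sup.2 ⟨⟨c, Submodule.mem_sup_left hc⟩, hc, ⟨d, Submodule.mem_sup_right hd⟩, hd, ?_⟩
      exact Subtype.ext hcd
  set π : W →ₗ[S] M :=
    LinearMap.ofIsCompl hcompl (0 : C' →ₗ[S] M) (W.subtype.comp D'.subtype) with hπ
  obtain ⟨f, hf⟩ := hinj.out W.subtype (Submodule.injective_subtype W) π
  have hfC : ∀ c ∈ C, f c = 0 := by
    intro c hc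
    have hcW : c ∈ W := Submodule.mem_sup_left hc
    have h1 := hf ⟨c, hcW⟩
    have h2 := LinearMap.ofIsCompl_left_apply hcompl (⟨⟨c, hcW⟩, hc⟩ : C')
      (φ := (0 : C' →ₗ[S] M)) (ψ := W.subtype.comp D'.subtype)
    simp only [LinearMap.zero_apply] at h2
    exact h1.trans h2
  have hfD : ∀ d ∈ D, f d = d := by
    intro d hd
    have hdW : d ∈ W := Submodule.mem_sup_right hd
    have h1 := hf ⟨d, hdW⟩
    have h2 := LinearMap.ofIsCompl_right_apply hcompl (⟨⟨d, hdW⟩, hd⟩ : D')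
      (φ := (0 : C' →ₗ[S] M)) (ψ := W.subtype.comp D'.subtype)
    exact h1.trans h2
  have hkerC : LinearMap.ker f = C := by
    refine le_antisymm (hCmax _ ⟨?_, ?_⟩ ?_) ?_
    · rw [eq_bot_iff]
      rintro w hw
      rw [Submodule.mem_inf] at hw
      obtain ⟨hwA, hwk⟩ := hw
      have h1 : f w = w := hfD w (hAD hwA)
      rw [LinearMap.mem_ker] at hwk
      exact Submodule.mem_bot _ |>.2 (by rw [← h1, hwk])
    · intro b hb
      exact LinearMap.mem_ker.2 (hfC b (hBC hb))
    · intro c hc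
      exact LinearMap.mem_ker.2 (hfC c hc)
    · intro c hc
      exact LinearMap.mem_ker.2 (hfC c hc)
  have hrange : LinearMap.range f = D := by
    have hDle : D ≤ LinearMap.range f := fun d hd => ⟨d, hfD d hd⟩
    refine le_antisymm (hDmax _ ⟨hAD.trans hDle, ?_⟩ hDle) hDle
    rw [eq_bot_iff]
    rintro w hw
    rw [Submodule.mem_inf] at hw
    obtain ⟨hwr, hwC⟩ := hw
    obtain ⟨x, rfl⟩ := hwr
    rw [Submodule.mem_bot]
    by_contra hne
    have hxC : x ∉ C := fun hx => hne (hfC x hx)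
    obtain ⟨a, ha, ha0⟩ := (Submodule.ne_bot_iff _).1 (hMC x hxC)
    rw [Submodule.mem_inf] at ha
    obtain ⟨haA, haCw⟩ := ha
    obtain ⟨c, hc, v, hv, hcv⟩ := Submodule.mem_sup.1 haCw
    obtain ⟨s, rfl⟩ := Submodule.mem_span_singleton.1 hv
    have hfa : f a = a := hfD a (hAD haA)
    have hasw : a = s • f x := by
      rw [← hfa, ← hcv, map_add, map_smul, hfC c hc, zero_add]
    have haC : a ∈ C := hasw ▸ C.smul_mem s hwC
    have hmem : a ∈ A ⊓ C := ⟨haA, haC⟩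
    rw [hAC, Submodule.mem_bot] at hmem
    exact ha0 hmem
  have hsup : C ⊔ D = ⊤ := by
    rw [eq_top_iff]
    rintro w -
    have h1 : f w ∈ D := hrange ▸ LinearMap.mem_range_self f w
    have h2 : w - f w ∈ C := by
      rw [← hkerC, LinearMap.mem_ker, map_sub, hfD _ h1, sub_self]
    have h3 : w = (w - f w) + f w := (sub_add_cancel w (f w)).symm
    exact h3 ▸ Submodule.add_mem_sup h2 h1
  have hinf : C ⊓ D = ⊥ := by rw [inf_comm]; exact hDC
  rcases hind.2 C D hinf hsup with h | h
  · exact hB (le_bot_iff.1 (h ▸ hBC))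
  · exact hA (le_bot_iff.1 (h ▸ hAD))

theorem stmt6 {R : Type u} [Ring R] [IsNoetherian Rᵐᵒᵖ R]
    (z : R) (hz : z ∈ Set.center R)
    {E : Type u} [AddCommGroup E] [Module Rᵐᵒᵖ E]
    (hEind : IsIndecomposable Rᵐᵒᵖ E) (hEinj : Module.Injective Rᵐᵒᵖ E)
    (F : Submodule Rᵐᵒᵖ E) (hF : F ≠ ⊥) (hFz : ∀ y ∈ F, (op z : Rᵐᵒᵖ) • y = 0) :
    ∀ x : E, ∃ n : ℕ, (op (z ^ n) : Rᵐᵒᵖ) • x = 0 := by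
  intro x
  by_contra hcon
  push_neg at hcon
  have hzc : ∀ r : R, z * r = r * z := fun r => (Set.mem_center_iff.1 hz).comm r
  have key : ∀ (r : R) (m : ℕ),
      (op r : Rᵐᵒᵖ) • ((op (z ^ m) : Rᵐᵒᵖ) • x) = (op (z ^ m * r) : Rᵐᵒᵖ) • x := by
    intro r m
    rw [← mul_smul, ← op_mul]
  have hshift : ∀ (r : R) (m : ℕ), z ^ (m + 1) * r = (z ^ m * r) * z := by
    intro r m
    rw [pow_succ, mul_assoc, mul_assoc, hzc r]
  let Jfun : ℕ → Submodule Rᵐᵒᵖ R := fun m =>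
    { carrier := {r : R | (op (z ^ m * r) : Rᵐᵒᵖ) • x = 0}
      add_mem' := by
        intro a b ha hb
        simp only [Set.mem_setOf_eq] at ha hb ⊢
        rw [mul_add, op_add, add_smul, ha, hb, add_zero]
      zero_mem' := by
        simp only [Set.mem_setOf_eq, mul_zero, op_zero, zero_smul]
      smul_mem' := by
        intro c r hr
        simp only [Set.mem_setOf_eq] at hr ⊢
        have h1 : c • r = r * c.unop := rfl
        rw [h1, ← mul_assoc, op_mul, op_unop, mul_smul, hr, smul_zero] }
  have memJ : ∀ (m : ℕ) (r : R), r ∈ Jfun m ↔ (op (z ^ m * r) : Rᵐᵒᵖ) • x = 0 :=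
    fun m r => Iff.rfl
  have Jmono : Monotone Jfun := by
    apply monotone_nat_of_le_succ
    intro m r hr
    rw [memJ] at hr ⊢
    rw [hshift, op_mul, mul_smul, hr, smul_zero]
  obtain ⟨n, hn⟩ := monotone_stabilizes_iff_noetherian.2 inferInstance ⟨Jfun, Jmono⟩
  have hJ : Jfun n = Jfun (n + 1) := hn (n + 1) (Nat.le_succ n)
  set y : E := (op (z ^ n) : Rᵐᵒᵖ) • x with hy
  have hy0 : y ≠ 0 := hcon n
  set A : Submodule Rᵐᵒᵖ E := Submodule.span Rᵐᵒᵖ {y} with hA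
  have hAne : A ≠ ⊥ := by
    rw [hA, ne_eq, Submodule.span_singleton_eq_bot]
    exact hy0
  have hAF : A ⊓ F = ⊥ := by
    rw [eq_bot_iff]
    rintro w hw
    rw [Submodule.mem_inf] at hw
    obtain ⟨hwA, hwF⟩ := hw
    obtain ⟨a, rfl⟩ := Submodule.mem_span_singleton.1 hwA
    have hay : a • y = (op (z ^ n * a.unop) : Rᵐᵒᵖ) • x := by
      rw [hy, ← key a.unop n, op_unop]
    have h1 : (op z : Rᵐᵒᵖ) • (a • y) = 0 := hFz _ hwF
    have h2 : (op (z ^ (n + 1) * a.unop) : Rᵐᵒᵖ) • x = 0 := by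
      rw [hshift, op_mul, mul_smul, ← hay, h1]
    have h3 : a.unop ∈ Jfun n := by
      rw [hJ, memJ]
      exact h2
    rw [memJ] at h3
    rw [Submodule.mem_bot, hay, h3]
  exact uniform_aux hEind hEinj hAne hF hAF
end

section
/- Let R be a ring, z a central element of R, and set S = R/zR (the quotient by the two-sided ideal generated by z). Let F be an indecomposable injective right S-module and let E be an injective right R-module containing F (viewed as an R-module by restriction of scalars along the quotient map) as an essential submodule. Then the annihilator of z in E equals F, i.e., {x ∈ E | x·z = 0} = F. -/
open MulOpposite

universe u

section Aux

variable {R S : Type u} [Ring R] [Ring S]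

/-- The annihilator of `z` in `E`, as an `Rᵐᵒᵖ`-submodule. -/
def zAnn (z : R) (hz : z ∈ Set.center R)
    {E : Type u} [AddCommGroup E] [Module Rᵐᵒᵖ E] : Submodule Rᵐᵒᵖ E where
  carrier := {x : E | (op z : Rᵐᵒᵖ) • x = 0}
  add_mem' := by
    intro a b ha hb
    simp only [Set.mem_setOf_eq] at *
    rw [smul_add, ha, hb, add_zero]
  zero_mem' := by simp
  smul_mem' := by
    intro c x hx
    simp only [Set.mem_setOf_eq] at *
    have h1 : (op z : Rᵐᵒᵖ) * c = c * op z := by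
      rw [← op_unop c, ← op_mul, ← op_mul, hz.comm]
    rw [← mul_smul, h1, mul_smul, hx, smul_zero]

/-- key lemma: on the annihilator of `z`, the action of `r : R` depends only on `g r`. -/
theorem zAnn_key (z : R) (g : R →+* S) (hker : ∀ r : R, g r = 0 ↔ ∃ a : R, r = z * a)
    {E : Type u} [AddCommGroup E] [Module Rᵐᵒᵖ E]
    (x : E) (hx : (op z : Rᵐᵒᵖ) • x = 0) {r r' : R} (h : g r = g r') :
    (op r : Rᵐᵒᵖ) • x = (op r' : Rᵐᵒᵖ) • x := by
  obtain ⟨a, ha⟩ := (hker (r - r')).1 (by rw [map_sub, h, sub_self])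
  have h0 : (op (r - r') : Rᵐᵒᵖ) • x = 0 := by
    rw [ha, show (op (z * a) : Rᵐᵒᵖ) = op a * op z from rfl, mul_smul, hx, smul_zero]
  rw [op_sub, sub_smul, sub_eq_zero] at h0
  exact h0

/-- The `Sᵐᵒᵖ`-module structure on the annihilator of `z`, via a section of `g`. -/
noncomputable def zAnnModule (z : R) (hz : z ∈ Set.center R)
    (g : R →+* S) (hg : Function.Surjective g)
    (hker : ∀ r : R, g r = 0 ↔ ∃ a : R, r = z * a)
    {E : Type u} [AddCommGroup E] [Module Rᵐᵒᵖ E] :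
    Module Sᵐᵒᵖ ↥(zAnn z hz (E := E)) :=
  let σ : S → R := fun s => (hg s).choose
  have hσ : ∀ s : S, g (σ s) = s := fun s => (hg s).choose_spec
  { smul := fun s x => (op (σ (unop s)) : Rᵐᵒᵖ) • x
    one_smul := fun x => by
      ext
      show (op (σ (unop (1 : Sᵐᵒᵖ))) : Rᵐᵒᵖ) • (x : E) = (x : E)
      have := zAnn_key z g hker (x : E) x.2 (r := σ (unop (1 : Sᵐᵒᵖ))) (r' := 1)
        (by rw [hσ]; simp)
      rw [this, op_one, one_smul]
    mul_smul := fun s t x => by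
      ext
      show (op (σ (unop (s * t))) : Rᵐᵒᵖ) • (x : E)
        = (op (σ (unop s)) : Rᵐᵒᵖ) • ((op (σ (unop t)) : Rᵐᵒᵖ) • (x : E))
      rw [← mul_smul, show (op (σ (unop s)) : Rᵐᵒᵖ) * op (σ (unop t))
        = op (σ (unop t) * σ (unop s)) from rfl]
      exact zAnn_key z g hker (x : E) x.2 (by rw [hσ, map_mul, hσ, hσ]; rfl)
    smul_zero := fun s => by
      ext
      show (op (σ (unop s)) : Rᵐᵒᵖ) • ((0 : ↥(zAnn z hz (E := E))) : E) = (0 : E)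
      simp
    smul_add := fun s x y => by
      ext
      show (op (σ (unop s)) : Rᵐᵒᵖ) • ((x : E) + (y : E))
        = (op (σ (unop s)) : Rᵐᵒᵖ) • (x : E) + (op (σ (unop s)) : Rᵐᵒᵖ) • (y : E)
      rw [smul_add]
    add_smul := fun s t x => by
      ext
      show (op (σ (unop (s + t))) : Rᵐᵒᵖ) • (x : E)
        = (op (σ (unop s)) : Rᵐᵒᵖ) • (x : E) + (op (σ (unop t)) : Rᵐᵒᵖ) • (x : E)
      rw [← add_smul, show (op (σ (unop s)) : Rᵐᵒᵖ) + op (σ (unop t))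
        = op (σ (unop s) + σ (unop t)) from rfl]
      exact zAnn_key z g hker (x : E) x.2 (by rw [hσ, map_add, hσ, hσ]; rfl)
    zero_smul := fun x => by
      ext
      show (op (σ (unop (0 : Sᵐᵒᵖ))) : Rᵐᵒᵖ) • (x : E) = (0 : E)
      have := zAnn_key z g hker (x : E) x.2 (r := σ (unop (0 : Sᵐᵒᵖ))) (r' := 0)
        (by rw [hσ]; simp)
      rw [this]
      simp }

end Aux

theorem stmt8 {R S : Type u} [Ring R] [Ring S]
    (z : R) (hz : z ∈ Set.center R)
    -- `S = R/zR`, presented as a surjective ring homomorphism with kernel `zR`: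
    (g : R →+* S) (hg : Function.Surjective g)
    (hker : ∀ r : R, g r = 0 ↔ ∃ a : R, r = z * a)
    -- `F` is an indecomposable injective right `S`-module:
    {F : Type u} [AddCommGroup F] [Module Sᵐᵒᵖ F]
    (hFind : IsIndecomposable Sᵐᵒᵖ F) (hFinj : Module.Injective Sᵐᵒᵖ F)
    -- `F` viewed as a right `R`-module by restriction of scalars along `g`:
    [Module Rᵐᵒᵖ F] (hres : ∀ (r : R) (x : F), (op r : Rᵐᵒᵖ) • x = (op (g r) : Sᵐᵒᵖ) • x)
    -- `E` is an injective right `R`-module containing `F` as an essential submodule: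
    {E : Type u} [AddCommGroup E] [Module Rᵐᵒᵖ E] (hEinj : Module.Injective Rᵐᵒᵖ E)
    (ι : F →ₗ[Rᵐᵒᵖ] E) (hι : Function.Injective ι)
    (hess : IsEssentialSubmodule (LinearMap.range ι)) :
    {x : E | (op z : Rᵐᵒᵖ) • x = 0} = Set.range ι := by
  classical
  -- `g z = 0`
  have hgz : g z = 0 := (hker z).2 ⟨1, (mul_one z).symm⟩
  set A : Submodule Rᵐᵒᵖ E := zAnn z hz with hA
  letI : Module Sᵐᵒᵖ ↥A := zAnnModule z hz g hg hker
  set σ : S → R := fun s => (hg s).choose with hσdef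
  have hσ : ∀ s : S, g (σ s) = s := fun s => (hg s).choose_spec
  have hsmul : ∀ (s : Sᵐᵒᵖ) (x : ↥A), ((s • x : ↥A) : E) = (op (σ (unop s)) : Rᵐᵒᵖ) • (x : E) :=
    fun _ _ => rfl
  -- ι maps F into A
  have hιz : ∀ y : F, (op z : Rᵐᵒᵖ) • (ι y) = 0 := by
    intro y
    rw [← map_smul, hres, hgz]
    simp
  -- the inclusion F → A as an Sᵐᵒᵖ-linear map
  have hιA : ∀ y : F, ι y ∈ A := fun y => hιz y
  let incl : F →ₗ[Sᵐᵒᵖ] ↥A :=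
    { toFun := fun y => ⟨ι y, hιA y⟩
      map_add' := fun a b => by ext; simp
      map_smul' := fun s y => by
        ext
        rw [hsmul]
        show ι (s • y) = (op (σ (unop s)) : Rᵐᵒᵖ) • ι y
        rw [← map_smul, hres, hσ, op_unop] }
  have hincl_inj : Function.Injective incl := by
    intro a b hab
    apply hι
    exact congrArg Subtype.val hab
  obtain ⟨h, hh⟩ := hFinj.out incl hincl_inj (LinearMap.id (M := F))
  -- the complement N = ker h, as an Rᵐᵒᵖ-submodule of E
  let N : Submodule Rᵐᵒᵖ E :=
    { carrier := {x : E | ∃ hx : x ∈ A, h ⟨x, hx⟩ = 0}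
      add_mem' := by
        rintro a b ⟨ha, ha0⟩ ⟨hb, hb0⟩
        refine ⟨A.add_mem ha hb, ?_⟩
        have : (⟨a + b, A.add_mem ha hb⟩ : ↥A) = ⟨a, ha⟩ + ⟨b, hb⟩ := rfl
        rw [this, map_add, ha0, hb0, add_zero]
      zero_mem' := ⟨A.zero_mem, by
        have : (⟨(0 : E), A.zero_mem⟩ : ↥A) = 0 := rfl
        rw [this, map_zero]⟩
      smul_mem' := by
        rintro c x ⟨hx, hx0⟩
        refine ⟨A.smul_mem c hx, ?_⟩
        have hc : (⟨c • x, A.smul_mem c hx⟩ : ↥A) = (op (g (unop c)) : Sᵐᵒᵖ) • ⟨x, hx⟩ := by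
          ext
          rw [hsmul]
          show c • x = (op (σ (g (unop c))) : Rᵐᵒᵖ) • x
          rw [← op_unop c]
          exact (zAnn_key z g hker x hx (by rw [hσ, unop_op])).symm
        rw [hc, map_smul, hx0, smul_zero] }
  -- N meets F trivially, hence N = ⊥ by essentiality
  have hNbot : N = ⊥ := by
    by_contra hne
    apply hess N hne
    rw [eq_bot_iff]
    rintro x ⟨⟨hxA, hx0⟩, ⟨y, hy⟩⟩
    have : (⟨x, hxA⟩ : ↥A) = incl y := by ext; exact hy.symm
    rw [this, hh] at hx0
    simp only [LinearMap.id_coe, id_eq] at hx0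
    have : x = 0 := by rw [← hy, hx0, map_zero]
    simp [this]
  -- conclude
  ext x
  constructor
  · intro hx
    have hxA : x ∈ A := hx
    set y : F := h ⟨x, hxA⟩ with hy
    have hsub : x - ι y ∈ N := by
      refine ⟨A.sub_mem hxA (hιA y), ?_⟩
      have : (⟨x - ι y, A.sub_mem hxA (hιA y)⟩ : ↥A) = ⟨x, hxA⟩ - incl y := rfl
      rw [this, map_sub, hh]
      simp [hy]
    rw [hNbot] at hsub
    have : x - ι y = 0 := hsub
    exact ⟨y, (sub_eq_zero.mp this).symm⟩
  · rintro ⟨y, rfl⟩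
    exact hιz y
end

section
/- Let R be a right noetherian ring and let E and F be indecomposable injective right R-modules such that for every finitely generated right R-module M, Hom(M,E) ≠ 0 if and only if Hom(M,F) ≠ 0. Then E ≅ F. (This says the injective spectrum of a right noetherian ring is a T₀ (Kolmogorov) topological space.) -/
open MulOpposite

universe u

/-- An indecomposable injective module is uniform. -/
lemma uniform_of_indec {R : Type*} {E : Type u} [Ring R] [AddCommGroup E] [Module R E]
    (hind : IsIndecomposable R E) (hinj : Module.Injective R E)
    (A B : Submodule R E) (hAB : A ⊓ B = ⊥) : A = ⊥ ∨ B = ⊥ := by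
  by_contra hcon
  push_neg at hcon
  obtain ⟨hA, hB⟩ := hcon
  -- S1 : essential extensions of A
  set S1 : Set (Submodule R E) :=
    {X | A ≤ X ∧ ∀ Y : Submodule R E, Y ≤ X → Y ⊓ A = ⊥ → Y = ⊥} with hS1
  have hAS1 : A ∈ S1 := by
    refine ⟨le_rfl, fun Y hY h0 => ?_⟩
    rwa [inf_eq_left.mpr hY] at h0
  obtain ⟨C, hAC, hCS1, hCmax⟩ : ∃ C, A ≤ C ∧ C ∈ S1 ∧ ∀ z ∈ S1, C ≤ z → z ≤ C := by
    obtain ⟨C, hAC, hCmax⟩ := zorn_le_nonempty₀ S1 (fun c hc hchain y hy => by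
      refine ⟨sSup c, ⟨((hc hy).1).trans (le_sSup hy), fun Y hY h0 => ?_⟩, fun z hz => le_sSup hz⟩
      by_contra hYne
      obtain ⟨v, hv, hvne⟩ := Submodule.ne_bot_iff Y |>.mp hYne
      obtain ⟨X0, hX0c, hvX0⟩ := (Submodule.mem_sSup_of_directed ⟨y, hy⟩ hchain.directedOn).mp (hY hv)
      have hsp : (Submodule.span R {v}) ⊓ A = ⊥ := by
        rw [eq_bot_iff]
        refine le_trans (inf_le_inf_right A ?_) h0.le
        exact (Submodule.span_singleton_le_iff_mem v Y).mpr hv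
      have := (hc hX0c).2 (Submodule.span R {v}) ((Submodule.span_singleton_le_iff_mem v X0).mpr hvX0) hsp
      exact hvne (by simpa using (Submodule.span_singleton_eq_bot).mp this)) A hAS1
    exact ⟨C, hAC, hCmax.1, fun z hz hle => hCmax.2 hz hle⟩
  have hBC : B ⊓ C = ⊥ := by
    have := hCS1.2 (B ⊓ C) inf_le_right ?_
    · exact this
    · rw [eq_bot_iff]
      refine le_trans ?_ hAB.le
      intro x hx
      exact ⟨hx.2, hx.1.1⟩
  -- S2 : complements of C containing B
  set S2 : Set (Submodule R E) := {X | B ≤ X ∧ X ⊓ C = ⊥} with hS2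
  have hBS2 : B ∈ S2 := ⟨le_rfl, hBC⟩
  obtain ⟨D, hBD, hDS2, hDmax⟩ : ∃ D, B ≤ D ∧ D ∈ S2 ∧ ∀ z ∈ S2, D ≤ z → z ≤ D := by
    obtain ⟨D, hBD, hDmax⟩ := zorn_le_nonempty₀ S2 (fun c hc hchain y hy => by
      refine ⟨sSup c, ⟨((hc hy).1).trans (le_sSup hy), ?_⟩, fun z hz => le_sSup hz⟩
      rw [eq_bot_iff]
      intro v hv
      obtain ⟨X0, hX0c, hvX0⟩ := (Submodule.mem_sSup_of_directed ⟨y, hy⟩ hchain.directedOn).mp hv.1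
      have : v ∈ X0 ⊓ C := ⟨hvX0, hv.2⟩
      rw [(hc hX0c).2] at this
      exact this) B hBS2
    exact ⟨D, hBD, hDmax.1, fun z hz hle => hDmax.2 hz hle⟩
  -- construct the projection g : E → E with g|C = id, g|D = 0
  set π := D.mkQ with hπ
  set i : ↥C →ₗ[R] (E ⧸ D) := π.comp C.subtype with hi
  have hiinj : Function.Injective i := by
    intro x y hxy
    have h0 : D.mkQ ((x : E) - (y : E)) = 0 := by
      rw [map_sub, sub_eq_zero]; exact hxy
    rw [Submodule.mkQ_apply, Submodule.Quotient.mk_eq_zero] at h0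
    have hmem : (x : E) - y ∈ D ⊓ C := ⟨h0, sub_mem x.2 y.2⟩
    rw [hDS2.2] at hmem
    exact Subtype.ext (sub_eq_zero.mp hmem)
  obtain ⟨g', hg'⟩ := hinj.out i hiinj C.subtype
  set g : E →ₗ[R] E := g'.comp π with hg
  have hgC : ∀ c ∈ C, g c = c := fun c hc => hg' ⟨c, hc⟩
  have hgD : ∀ d ∈ D, g d = 0 := by
    intro d hd
    have : π d = 0 := (Submodule.Quotient.mk_eq_zero D).mpr hd
    simp [hg, this]
  have hDker : D ≤ LinearMap.ker g := fun d hd => LinearMap.mem_ker.mpr (hgD d hd)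
  have hkerC : LinearMap.ker g ⊓ C = ⊥ := by
    rw [eq_bot_iff]
    intro x hx
    have : g x = x := hgC x hx.2
    have h0 : g x = 0 := hx.1
    exact (Submodule.mem_bot _).mpr (by rw [← this]; exact h0)
  have hkerD : LinearMap.ker g = D :=
    le_antisymm (hDmax _ ⟨hBD.trans hDker, hkerC⟩ hDker) hDker
  -- range g = C
  have hCrange : C ≤ LinearMap.range g := fun c hc => ⟨c, hgC c hc⟩
  have hrange : LinearMap.range g = C := by
    refine le_antisymm (hCmax _ ⟨hAC.trans hCrange, fun Y hY h0 => ?_⟩ hCrange) hCrange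
    by_contra hYne
    obtain ⟨y, hy, hyne⟩ := Submodule.ne_bot_iff Y |>.mp hYne
    obtain ⟨x, hx⟩ := hY hy
    have hxD : x ∉ D := fun hxD => hyne (by rw [← hx, hgD x hxD])
    have hD' : ¬ (D ⊔ Submodule.span R {x}) ⊓ C = ⊥ := by
      intro hbot
      have := hDmax _ ⟨hBD.trans le_sup_left, hbot⟩ le_sup_left
      exact hxD (this (Submodule.mem_sup_right (Submodule.mem_span_singleton_self x)))
    obtain ⟨c, hc, hcne⟩ := Submodule.ne_bot_iff _ |>.mp hD'
    obtain ⟨d, hd, s, hs, hdc⟩ := Submodule.mem_sup.mp hc.1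
    obtain ⟨r, hr⟩ := Submodule.mem_span_singleton.mp hs
    have hgc : g c = c := hgC c hc.2
    have hgc2 : g c = r • y := by
      rw [← hdc]
      rw [map_add, hgD d hd, ← hr, map_smul, hx, zero_add]
    have hcY : c ∈ Y ⊓ C := ⟨hgc ▸ hgc2 ▸ Submodule.smul_mem Y r hy, hc.2⟩
    have hYC : (Y ⊓ C) = ⊥ := hCS1.2 (Y ⊓ C) inf_le_right (by
      rw [eq_bot_iff]
      refine le_trans ?_ h0.le
      intro z hz
      exact ⟨hz.1.1, hz.2⟩)
    rw [hYC] at hcY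
    exact hcne hcY
  -- decomposition
  have hsup : C ⊔ LinearMap.ker g = ⊤ := by
    rw [eq_top_iff]
    intro x _
    have h1 : g x ∈ C := hrange ▸ LinearMap.mem_range_self g x
    have h2 : x - g x ∈ LinearMap.ker g := by
      rw [LinearMap.mem_ker, map_sub, hgC _ h1, sub_self]
    exact Submodule.mem_sup.mpr ⟨g x, h1, x - g x, h2, by abel⟩
  rcases hind.2 C (LinearMap.ker g) (by rw [inf_comm]; exact hkerC) hsup with hC0 | hk0
  · exact hA (le_bot_iff.mp (hC0 ▸ hAC))
  · rw [hkerD] at hk0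
    exact hB (le_bot_iff.mp (hk0 ▸ hBD))

lemma comp_mkQ_ne_zero {R M N : Type*} [Ring R] [AddCommGroup M] [Module R M]
    [AddCommGroup N] [Module R N] (L : Submodule R M) (χ : (M ⧸ L) →ₗ[R] N) (hχ : χ ≠ 0) :
    χ.comp L.mkQ ≠ 0 := fun h0 => hχ (by
      have : ∀ x : M ⧸ L, χ x = 0 := by
        intro x
        obtain ⟨c, rfl⟩ := Submodule.mkQ_surjective L x
        simpa using LinearMap.congr_fun h0 c
      ext x
      simpa using this (Submodule.Quotient.mk x))

lemma isNoetherianRing_op' {R : Type u} [Ring R] [IsNoetherian Rᵐᵒᵖ R] :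
    IsNoetherianRing Rᵐᵒᵖ := by
  let e : R ≃ₗ[Rᵐᵒᵖ] Rᵐᵒᵖ :=
    { toFun := op, invFun := unop, left_inv := fun _ => rfl, right_inv := fun _ => rfl,
      map_add' := fun _ _ => rfl, map_smul' := fun x r => rfl }
  exact isNoetherian_of_linearEquiv e

theorem stmt9 {R : Type u} [Ring R] [IsNoetherian Rᵐᵒᵖ R]
    {E : Type u} [AddCommGroup E] [Module Rᵐᵒᵖ E]
    (hEind : IsIndecomposable Rᵐᵒᵖ E) (hEinj : Module.Injective Rᵐᵒᵖ E)
    {F : Type u} [AddCommGroup F] [Module Rᵐᵒᵖ F]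
    (hFind : IsIndecomposable Rᵐᵒᵖ F) (hFinj : Module.Injective Rᵐᵒᵖ F)
    (h : ∀ (M : Type u) [AddCommGroup M] [Module Rᵐᵒᵖ M], Module.Finite Rᵐᵒᵖ M →
      ((∃ φ : M →ₗ[Rᵐᵒᵖ] E, φ ≠ 0) ↔ (∃ ψ : M →ₗ[Rᵐᵒᵖ] F, ψ ≠ 0))) :
    Nonempty (E ≃ₗ[Rᵐᵒᵖ] F) := by
  classical
  obtain ⟨e, he⟩ := hEind.1
  set C : Submodule Rᵐᵒᵖ E := Submodule.span Rᵐᵒᵖ {e} with hC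
  have hCfg : C.FG := Submodule.fg_span_singleton e
  haveI : IsNoetherianRing Rᵐᵒᵖ := isNoetherianRing_op'
  haveI hCnoeth : IsNoetherian Rᵐᵒᵖ ↥C := isNoetherian_of_fg_of_noetherian C hCfg
  haveI : Module.Finite Rᵐᵒᵖ ↥C := Module.Finite.iff_fg.mpr hCfg
  have heC : e ∈ C := Submodule.mem_span_singleton_self e
  have hsub_ne : (C.subtype : ↥C →ₗ[Rᵐᵒᵖ] E) ≠ 0 := by
    intro h0
    exact he (by simpa using LinearMap.congr_fun h0 ⟨e, heC⟩)
  obtain ⟨φ0, hφ0⟩ := (h ↥C inferInstance).mp ⟨C.subtype, hsub_ne⟩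
  set S : Set (Submodule Rᵐᵒᵖ ↥C) :=
    {N | ∃ φ : ↥C →ₗ[Rᵐᵒᵖ] F, φ ≠ 0 ∧ LinearMap.ker φ = N} with hS
  obtain ⟨K, hKS, hKmax⟩ := (set_has_maximal_iff_noetherian.mpr hCnoeth) S ⟨_, φ0, hφ0, rfl⟩
  obtain ⟨φ, hφne, hφker⟩ := hKS
  set M := (↥C ⧸ K) with hM
  haveI : Module.Finite Rᵐᵒᵖ M := Module.Finite.of_surjective K.mkQ (Submodule.mkQ_surjective K)
  -- every nonzero map M → F is injective
  have key : ∀ χ : M →ₗ[Rᵐᵒᵖ] F, χ ≠ 0 → Function.Injective χ := by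
    intro χ hχ
    have hcomp_ne : χ.comp K.mkQ ≠ 0 := comp_mkQ_ne_zero K χ hχ
    have hK_le : K ≤ LinearMap.ker (χ.comp K.mkQ) := by
      intro k hk
      have : K.mkQ k = 0 := by
        rw [Submodule.mkQ_apply, Submodule.Quotient.mk_eq_zero]; exact hk
      simp [LinearMap.mem_ker, this]
    have hker_eq : LinearMap.ker (χ.comp K.mkQ) = K := by
      by_contra hne
      exact hKmax _ ⟨χ.comp K.mkQ, hcomp_ne, rfl⟩ (lt_of_le_of_ne hK_le (Ne.symm hne))
    rw [← LinearMap.ker_eq_bot, eq_bot_iff]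
    intro m hm
    obtain ⟨c, rfl⟩ := Submodule.mkQ_surjective K m
    have hc : c ∈ LinearMap.ker (χ.comp K.mkQ) := hm
    rw [hker_eq] at hc
    refine (Submodule.mem_bot _).mpr ?_
    rw [Submodule.mkQ_apply, Submodule.Quotient.mk_eq_zero]; exact hc
  set φb : M →ₗ[Rᵐᵒᵖ] F := K.liftQ φ (le_of_eq hφker.symm) with hφb
  have hφb_comp : φb.comp K.mkQ = φ := K.liftQ_mkQ φ _
  have hφb_ne : φb ≠ 0 := by
    intro h0
    apply hφne
    rw [← hφb_comp, h0, LinearMap.zero_comp]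
  obtain ⟨ψ, hψne⟩ := (h M inferInstance).mpr ⟨φb, hφb_ne⟩
  have hψinj : Function.Injective ψ := by
    set L := LinearMap.ker ψ with hL
    haveI : Module.Finite Rᵐᵒᵖ (M ⧸ L) :=
      Module.Finite.of_surjective L.mkQ (Submodule.mkQ_surjective L)
    set ψb : (M ⧸ L) →ₗ[Rᵐᵒᵖ] E := L.liftQ ψ le_rfl with hψb
    have hψb_comp : ψb.comp L.mkQ = ψ := L.liftQ_mkQ ψ _
    have hψb_ne : ψb ≠ 0 := by
      intro h0
      apply hψne
      rw [← hψb_comp, h0, LinearMap.zero_comp]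
    obtain ⟨χ', hχ'ne⟩ := (h (M ⧸ L) inferInstance).mp ⟨ψb, hψb_ne⟩
    have hcomp_ne : χ'.comp L.mkQ ≠ 0 := comp_mkQ_ne_zero L χ' hχ'ne
    have hinj2 := key _ hcomp_ne
    rw [← LinearMap.ker_eq_bot, ← hL, eq_bot_iff]
    intro m hm
    have hρ : L.mkQ m = 0 := by
      rw [Submodule.mkQ_apply, Submodule.Quotient.mk_eq_zero]; exact hm
    have h2 : (χ'.comp L.mkQ) m = (χ'.comp L.mkQ) 0 := by
      simp [LinearMap.comp_apply, hρ]
    exact (Submodule.mem_bot _).mpr (hinj2 h2)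
  -- extend φb along ψ to a map g : E → F
  obtain ⟨g, hgψ⟩ := hFinj.out ψ hψinj φb
  have hginj : Function.Injective g := by
    rw [← LinearMap.ker_eq_bot]
    have hint : LinearMap.range ψ ⊓ LinearMap.ker g = ⊥ := by
      rw [eq_bot_iff]
      rintro x ⟨⟨m, rfl⟩, hker⟩
      have h1 : φb m = 0 := by rw [← hgψ m]; exact hker
      have h2 : m = 0 := key φb hφb_ne (by rw [h1, map_zero])
      rw [h2, map_zero]
      exact Submodule.zero_mem ⊥
    rcases uniform_of_indec hEind hEinj _ _ hint with h1 | h2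
    · exact absurd (LinearMap.range_eq_bot.mp h1) hψne
    · exact h2
  -- g is surjective
  obtain ⟨r, hr⟩ := hEinj.out g hginj (LinearMap.id)
  set p : F →ₗ[Rᵐᵒᵖ] F := g.comp r with hp
  have hpg : ∀ x : E, p (g x) = g x := fun x => by
    simp [hp, LinearMap.comp_apply, hr x]
  have hidem : ∀ y, p (p y) = p y := fun y => hpg (r y)
  have hinf : LinearMap.range p ⊓ LinearMap.ker p = ⊥ := by
    rw [eq_bot_iff]
    rintro x ⟨⟨y, rfl⟩, hker⟩
    have : p (p y) = 0 := hker
    rw [hidem y] at this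
    rw [this]
    exact Submodule.zero_mem ⊥
  have hsup : LinearMap.range p ⊔ LinearMap.ker p = ⊤ := by
    rw [eq_top_iff]
    intro x _
    refine Submodule.mem_sup.mpr ⟨p x, ⟨x, rfl⟩, x - p x, ?_, by abel⟩
    rw [LinearMap.mem_ker, map_sub, hidem x, sub_self]
  have hrange_ne : LinearMap.range p ≠ ⊥ := by
    intro h0
    have hge : g e ≠ 0 := fun hge0 => he (hginj (by rw [hge0, map_zero]))
    apply hge
    have hmem : g e ∈ LinearMap.range p := ⟨g e, hpg e⟩
    rw [h0] at hmem
    exact (Submodule.mem_bot _).mp hmem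
  rcases hFind.2 _ _ hinf hsup with h1 | h2
  · exact absurd h1 hrange_ne
  have hgsurj : Function.Surjective g := by
    intro y
    refine ⟨r y, ?_⟩
    have hmem : y - p y ∈ LinearMap.ker p := by
      rw [LinearMap.mem_ker, map_sub, hidem y, sub_self]
    rw [h2] at hmem
    have h3 : y - p y = 0 := (Submodule.mem_bot _).mp hmem
    have h4 : p y = y := by rw [← sub_eq_zero]; rw [← neg_sub]; rw [h3, neg_zero]
    simpa [hp, LinearMap.comp_apply] using h4
  exact ⟨LinearEquiv.ofBijective g ⟨hginj, hgsurj⟩⟩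
end

section
/- Let R be a right noetherian domain and let E be an injective right R-module containing R (as a right module over itself) as an essential submodule (an injective hull of R_R). Then for every finitely generated right R-module M with Hom(M, E) ≠ 0 and every indecomposable injective right R-module F, one has Hom(M, F) ≠ 0. (Equivalently, E(R_R) lies in every nonempty basic open set [M] of the injective spectrum, so the injective spectrum of a right noetherian domain is irreducible with generic point E(R_R).) -/
open MulOpposite

universe u

theorem stmt12 {R : Type u} [Ring R] [IsDomain R] [IsNoetherian Rᵐᵒᵖ R]
    -- `E` is an injective hull of `R` as a right module over itself:
    {E : Type u} [AddCommGroup E] [Module Rᵐᵒᵖ E] (hEinj : Module.Injective Rᵐᵒᵖ E)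
    (ι : R →ₗ[Rᵐᵒᵖ] E) (hι : Function.Injective ι)
    (hess : IsEssentialSubmodule (LinearMap.range ι)) :
    ∀ (M : Type u) [AddCommGroup M] [Module Rᵐᵒᵖ M], Module.Finite Rᵐᵒᵖ M →
      (∃ φ : M →ₗ[Rᵐᵒᵖ] E, φ ≠ 0) →
      ∀ (F : Type u) [AddCommGroup F] [Module Rᵐᵒᵖ F],
        IsIndecomposable Rᵐᵒᵖ F → Module.Injective Rᵐᵒᵖ F →
        ∃ ψ : M →ₗ[Rᵐᵒᵖ] F, ψ ≠ 0 := by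
  intro M _ _ _hfin hφ F _ _ hFind hFinj
  obtain ⟨φ, hφ0⟩ := hφ
  have hrange : LinearMap.range φ ≠ ⊥ := by
    simpa [LinearMap.range_eq_bot] using hφ0
  obtain ⟨e, he, he0⟩ := Submodule.ne_bot_iff _ |>.mp (hess (LinearMap.range φ) hrange)
  obtain ⟨heφ, heι⟩ := he
  obtain ⟨m, hm⟩ := heφ
  obtain ⟨r, hr⟩ := heι
  have hr0 : r ≠ 0 := by
    rintro rfl
    exact he0 (by rw [← hr, map_zero])
  obtain ⟨y, hy0⟩ := hFind.1
  set σ : Rᵐᵒᵖ →ₗ[Rᵐᵒᵖ] M := LinearMap.toSpanSingleton Rᵐᵒᵖ M m with hσdef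
  have hσ : Function.Injective σ := by
    rw [← LinearMap.ker_eq_bot, eq_bot_iff]
    rintro a ha
    have ham : a • m = 0 := ha
    have h1 : a • e = 0 := by rw [← hm, ← map_smul, ham, map_zero]
    have h2 : ι (a • r) = 0 := by rw [map_smul, hr, h1]
    have h3 : a • r = 0 := hι (by rw [h2, map_zero])
    have h4 : r * a.unop = 0 := h3
    have h5 : a.unop = 0 := (mul_eq_zero.mp h4).resolve_left hr0
    have : a = 0 := MulOpposite.unop_injective (by simpa using h5)
    simp [this]
  obtain ⟨ψ, hψ⟩ := hFinj.out σ hσ (LinearMap.toSpanSingleton Rᵐᵒᵖ F y)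
  refine ⟨ψ, fun h0 => hy0 ?_⟩
  have hcomp := hψ 1
  rw [h0] at hcomp
  simpa using hcomp.symm
end

section
/- Let R be a right noetherian ring and let I be a nonzero right ideal of R. Then the quotient right R-module R/I contains no submodule isomorphic to R (as a right module over itself); equivalently, there is no injective R-linear map R → R/I, i.e., every element of R/I has nonzero annihilator in R. -/
open MulOpposite

universe u

theorem stmt14 {R : Type u} [Ring R] [IsNoetherian Rᵐᵒᵖ R]
    -- `I` is a nonzero right ideal of `R`:
    (I : Submodule Rᵐᵒᵖ R) (hI : I ≠ ⊥) :
    -- there is no injective `R`-linear map `R → R/I`; equivalently, every element of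
    -- `R/I` has nonzero annihilator in `R`:
    (¬ ∃ φ : R →ₗ[Rᵐᵒᵖ] (R ⧸ I), Function.Injective φ) ∧
      ∀ m : R ⧸ I, ∃ r : R, r ≠ 0 ∧ (op r : Rᵐᵒᵖ) • m = 0 := by
  have key : ∀ m : R ⧸ I, ∃ r : R, r ≠ 0 ∧ (op r : Rᵐᵒᵖ) • m = 0 := by
    intro m
    obtain ⟨x, rfl⟩ := Submodule.Quotient.mk_surjective I m
    by_contra hcon
    push_neg at hcon
    -- hcon : ∀ r ≠ 0, op r • mk x ≠ 0
    have H : ∀ r : R, x * r ∈ I → r = 0 := by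
      intro r hr
      by_contra h0
      apply hcon r h0
      rw [← Submodule.Quotient.mk_smul, Submodule.Quotient.mk_eq_zero]
      simpa [op_smul_eq_mul] using hr
    -- left multiplication by `x` as an `Rᵐᵒᵖ`-linear map
    set f : R →ₗ[Rᵐᵒᵖ] R :=
      { toFun := fun a => x * a
        map_add' := mul_add x
        map_smul' := by
          intro c a
          simp [MulOpposite.smul_eq_mul_unop, mul_assoc] } with hf
    have hfapp : ∀ a : R, f a = x * a := fun a => rfl
    -- the ascending chain S 0 = I, S (n+1) = I ⊔ f(S n)
    set S : ℕ → Submodule Rᵐᵒᵖ R := fun n =>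
      Nat.rec I (fun _ Sn => I ⊔ Sn.map f) n with hS
    have hS0 : S 0 = I := rfl
    have hSsucc : ∀ n, S (n + 1) = I ⊔ (S n).map f := fun n => rfl
    have hmono : ∀ n, S n ≤ S (n + 1) := by
      intro n
      induction n with
      | zero => rw [hS0, hSsucc]; exact le_sup_left
      | succ n ih =>
        exact sup_le_sup_left (Submodule.map_mono ih) I
    -- key claim: x^(n+1) * a ∈ S n implies a = 0
    have claim : ∀ n, ∀ a : R, x ^ (n + 1) * a ∈ S n → a = 0 := by
      intro n
      induction n with
      | zero =>
        intro a ha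
        rw [hS0, pow_one] at ha
        exact H a ha
      | succ n ih =>
        intro a ha
        rw [hSsucc] at ha
        obtain ⟨i, hi, z, hz, hiz⟩ := Submodule.mem_sup.mp ha
        obtain ⟨s, hs, rfl⟩ := hz
        have hx : x * (x ^ (n + 1) * a - s) = i := by
          rw [mul_sub, ← mul_assoc, ← pow_succ', ← hiz, ← hfapp s, add_sub_cancel_right]
        have h0 := H _ (hx ▸ hi)
        have hsa : x ^ (n + 1) * a = s := sub_eq_zero.mp h0
        exact ih a (hsa ▸ hs)
    -- x^n * a ∈ S n for a ∈ I
    obtain ⟨a, haI, ha0⟩ := (Submodule.ne_bot_iff I).mp hI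
    have mem : ∀ n, x ^ n * a ∈ S n := by
      intro n
      induction n with
      | zero => simpa [hS0] using haI
      | succ n ih =>
        rw [hSsucc]
        refine le_sup_right (α := Submodule Rᵐᵒᵖ R) ?_
        exact ⟨x ^ n * a, ih, by rw [hfapp, ← mul_assoc, ← pow_succ']⟩
    have hstrict : ∀ n, S n < S (n + 1) := by
      intro n
      refine lt_of_le_of_ne (hmono n) fun h => ?_
      exact ha0 (claim n a (h ▸ mem (n + 1)))
    -- contradiction with noetherian
    have hmono' : Monotone S := monotone_nat_of_le_succ hmono
    obtain ⟨n, hn⟩ := monotone_stabilizes_iff_noetherian.mpr ‹IsNoetherian Rᵐᵒᵖ R› ⟨S, hmono'⟩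
    exact absurd (hn (n + 1) (Nat.le_succ n)).symm (hstrict n).ne'
  refine ⟨?_, key⟩
  rintro ⟨φ, hφ⟩
  obtain ⟨r, hr0, hr⟩ := key (φ 1)
  apply hr0
  have h1 : φ (op r • (1 : R)) = 0 := by rw [map_smul, hr]
  have h2 : (op r • (1 : R) : R) = r := by simp [op_smul_eq_mul]
  rw [h2] at h1
  exact hφ (h1.trans (map_zero φ).symm)
end

section
/- Let R be a right noetherian ring which is not right artinian but such that the right R-module R/I is artinian for every nonzero right ideal I (this is precisely the condition that R, as a right module over itself, is a 1-critical module in the sense of Gabriel–Rentschler Krull dimension). Then every indecomposable injective right R-module either has a simple submodule or contains a submodule isomorphic to R (as a right module over itself); that is, the indecomposable injective right R-modules are exactly E(R_R) and the injective hulls of the simple modules. -/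
open MulOpposite

universe u

theorem stmt17 {R : Type u} [Ring R] [IsNoetherian Rᵐᵒᵖ R]
    -- `R` is not right artinian:
    (hnotart : ¬ IsArtinian Rᵐᵒᵖ R)
    -- but `R/I` is artinian for every nonzero right ideal `I` (i.e. `R_R` is 1-critical):
    (hcrit : ∀ I : Submodule Rᵐᵒᵖ R, I ≠ ⊥ → IsArtinian Rᵐᵒᵖ (R ⧸ I)) :
    ∀ (E : Type u) [AddCommGroup E] [Module Rᵐᵒᵖ E],
      IsIndecomposable Rᵐᵒᵖ E → Module.Injective Rᵐᵒᵖ E →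
        (∃ S : Submodule Rᵐᵒᵖ E, IsAtom S) ∨
          (∃ φ : R →ₗ[Rᵐᵒᵖ] E, Function.Injective φ) := by
  intro E _ _ hind hinj
  obtain ⟨⟨x, hx⟩, -⟩ := hind
  set φ : R →ₗ[Rᵐᵒᵖ] E :=
    { toFun := fun r => op r • x
      map_add' := fun a b => by simp [op_add, add_smul]
      map_smul' := fun a r => by
        simp only [RingHom.id_apply]
        show op (r * a.unop) • x = a • (op r • x)
        rw [op_mul, mul_smul, op_unop] } with hφ
  by_cases hker : LinearMap.ker φ = ⊥
  · exact Or.inr ⟨φ, LinearMap.ker_eq_bot.mp hker⟩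
  · left
    have hart := hcrit _ hker
    have e : (R ⧸ LinearMap.ker φ) ≃ₗ[Rᵐᵒᵖ] LinearMap.range φ := φ.quotKerEquivRange
    have hartN : IsArtinian Rᵐᵒᵖ (LinearMap.range φ) := isArtinian_of_linearEquiv e
    have hne : LinearMap.range φ ≠ ⊥ := by
      intro h
      apply hx
      have : φ 1 ∈ LinearMap.range φ := LinearMap.mem_range_self φ 1
      rw [h] at this
      simpa [hφ] using this
    -- atomic
    have : IsAtomic (Submodule Rᵐᵒᵖ (LinearMap.range φ)) := inferInstance
    rcases this.eq_bot_or_exists_atom_le (⊤ : Submodule Rᵐᵒᵖ (LinearMap.range φ)) with h | ⟨S, hS, -⟩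
    · exfalso
      apply hne
      rw [Submodule.eq_bot_iff]
      intro y hy
      have hmem : (⟨y, hy⟩ : LinearMap.range φ) ∈ (⊥ : Submodule Rᵐᵒᵖ (LinearMap.range φ)) :=
        h ▸ Submodule.mem_top
      simpa [Submodule.mem_bot, Subtype.ext_iff] using hmem
    · refine ⟨S.map (LinearMap.range φ).subtype, ?_⟩
      have hsimp : IsSimpleModule Rᵐᵒᵖ S := (isSimpleModule_iff_isAtom).mpr hS
      have e2 : S ≃ₗ[Rᵐᵒᵖ] S.map (LinearMap.range φ).subtype :=
        Submodule.equivMapOfInjective _ (Submodule.injective_subtype _) S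
      have : IsSimpleModule Rᵐᵒᵖ (S.map (LinearMap.range φ).subtype) :=
        @IsSimpleModule.congr Rᵐᵒᵖ _ _ _ _ _ _ _ e2.symm hsimp
      exact isSimpleModule_iff_isAtom.mp this
end

section
/- Let f : R → S be a surjective ring homomorphism, let F be an indecomposable injective right S-module, let E be an injective right R-module containing F (viewed as an R-module by restriction of scalars along f) as an essential submodule, and let M be a right S-module. Then Hom_S(M, F) ≠ 0 if and only if Hom_R(M, E) ≠ 0, where in the latter M is viewed as a right R-module by restriction of scalars along f. (This shows that the map f* : injspec(S) → injspec(R), F ↦ E(F_R), maps closed sets to relatively closed sets.) -/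
open MulOpposite

universe u v

/-!
A nonzero `S`-linear map `M → F`, composed with `F ↪ E`, is a nonzero `R`-linear map `M → E`.
Conversely, let `ψ : M → E` be nonzero and `R`-linear. Since `f` is surjective, the preimage
`ψ⁻¹(F)` is an `S`-submodule of `M` and `ψ` restricts to an `S`-linear map `ψ⁻¹(F) → F`, which
extends to `M` because `F` is `S`-injective. It is nonzero because `F` is essential in `E`, so it
meets the nonzero submodule `range ψ`.
-/

section RestrictionAlongSurjection

variable {A B : Type*} [Ring A] [Ring B] {g : A → B}

section

variable {M N : Type*} [AddCommGroup M] [Module A M] [Module B M]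
  [AddCommGroup N] [Module A N] [Module B N]

def LinearMap.restrictScalarsAlong (hM : ∀ (a : A) (x : M), a • x = g a • x)
    (hN : ∀ (a : A) (y : N), a • y = g a • y) (φ : M →ₗ[B] N) : M →ₗ[A] N where
  toFun := φ
  map_add' := φ.map_add
  map_smul' a x := by rw [hM, hN, map_smul]; rfl

@[simp]
theorem LinearMap.restrictScalarsAlong_apply (hM : ∀ (a : A) (x : M), a • x = g a • x)
    (hN : ∀ (a : A) (y : N), a • y = g a • y) (φ : M →ₗ[B] N) (x : M) :
    φ.restrictScalarsAlong hM hN x = φ x :=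
  rfl

def Submodule.extendScalarsAlong (hg : Function.Surjective g)
    (hM : ∀ (a : A) (x : M), a • x = g a • x) (p : Submodule A M) : Submodule B M where
  carrier := p
  add_mem' := p.add_mem
  zero_mem' := p.zero_mem
  smul_mem' b x hx := by
    obtain ⟨a, rfl⟩ := hg b
    rw [← hM]
    exact p.smul_mem a hx

end

variable {M F E : Type v} [AddCommGroup M] [Module A M] [Module B M]
  [AddCommGroup F] [Module A F] [Module B F] [Module.Injective B F] [AddCommGroup E] [Module A E]

theorem Module.Injective.exists_extension_of_surjective
    (hg : Function.Surjective g) (hM : ∀ (a : A) (x : M), a • x = g a • x)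
    (hF : ∀ (a : A) (y : F), a • y = g a • y) (p : Submodule A M) (θ : p →ₗ[A] F) :
    ∃ φ : M →ₗ[B] F, ∀ x : p, φ x = θ x := by
  let p' := p.extendScalarsAlong hg hM
  let θ' : p' →ₗ[B] F :=
    { toFun x := θ ⟨x, x.2⟩
      map_add' x y := θ.map_add ⟨x, x.2⟩ ⟨y, y.2⟩
      map_smul' b x := by
        obtain ⟨a, rfl⟩ := hg b
        rw [RingHom.id_apply, ← hF, ← θ.map_smul]
        congr 1
        exact Subtype.ext (hM a x).symm }
  obtain ⟨φ, hφ⟩ := Module.Injective.out p'.subtype Subtype.coe_injective θ'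
  exact ⟨φ, fun x => hφ ⟨x, x.2⟩⟩

theorem exists_ne_zero_of_inf_range_ne_bot (hg : Function.Surjective g)
    (hM : ∀ (a : A) (x : M), a • x = g a • x) (hF : ∀ (a : A) (y : F), a • y = g a • y)
    (ι : F →ₗ[A] E) (hι : Function.Injective ι) (ψ : M →ₗ[A] E)
    (h : LinearMap.range ψ ⊓ LinearMap.range ι ≠ ⊥) : ∃ φ : M →ₗ[B] F, φ ≠ 0 := by
  obtain ⟨_, ⟨⟨m, rfl⟩, w, hw⟩, hne⟩ := (Submodule.ne_bot_iff _).1 h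
  let e := LinearEquiv.ofInjective ι hι
  let p := (LinearMap.range ι).comap ψ
  let θ : p →ₗ[A] F := e.symm.toLinearMap ∘ₗ ψ.restrict fun _ hx => hx
  obtain ⟨φ, hφ⟩ := Module.Injective.exists_extension_of_surjective hg hM hF p θ
  have hφm : φ m = w := by
    rw [hφ ⟨m, w, hw⟩]
    exact e.symm_apply_eq.2 (Subtype.ext hw.symm)
  refine ⟨φ, fun h0 => hne ?_⟩
  rw [← hw, ← hφm, h0, LinearMap.zero_apply, map_zero]

end RestrictionAlongSurjection

theorem stmt18_general {R S : Type u} [Ring R] [Ring S] (f : R →+* S)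
    (hf : Function.Surjective f)
    -- `F` is an indecomposable injective right `S`-module:
    {F : Type u} [AddCommGroup F] [Module Sᵐᵒᵖ F]
    (hFinj : Module.Injective Sᵐᵒᵖ F)
    -- `F` viewed as a right `R`-module by restriction of scalars along `f`:
    [Module Rᵐᵒᵖ F] (hresF : ∀ (r : R) (x : F), (op r : Rᵐᵒᵖ) • x = (op (f r) : Sᵐᵒᵖ) • x)
    -- `E` is an injective right `R`-module containing `F` as an essential submodule:
    {E : Type u} [AddCommGroup E] [Module Rᵐᵒᵖ E]
    (ι : F →ₗ[Rᵐᵒᵖ] E) (hι : Function.Injective ι)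
    (hess : IsEssentialSubmodule (LinearMap.range ι))
    -- `M` is a right `S`-module, also viewed as a right `R`-module along `f`:
    (M : Type u) [AddCommGroup M] [Module Sᵐᵒᵖ M]
    [Module Rᵐᵒᵖ M] (hresM : ∀ (r : R) (x : M), (op r : Rᵐᵒᵖ) • x = (op (f r) : Sᵐᵒᵖ) • x) :
    (∃ φ : M →ₗ[Sᵐᵒᵖ] F, φ ≠ 0) ↔ (∃ ψ : M →ₗ[Rᵐᵒᵖ] E, ψ ≠ 0) := by
  let g : Rᵐᵒᵖ → Sᵐᵒᵖ := fun a => op (f a.unop)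
  have hg : Function.Surjective g := fun b =>
    let ⟨r, hr⟩ := hf b.unop
    ⟨op r, congrArg op hr⟩
  have hM : ∀ (a : Rᵐᵒᵖ) (x : M), a • x = g a • x := fun a => hresM a.unop
  have hF : ∀ (a : Rᵐᵒᵖ) (y : F), a • y = g a • y := fun a => hresF a.unop
  constructor
  · rintro ⟨φ, hφ⟩
    refine ⟨ι ∘ₗ φ.restrictScalarsAlong hM hF, fun h => hφ (LinearMap.ext fun m => hι ?_)⟩
    simpa using LinearMap.congr_fun h m
  · rintro ⟨ψ, hψ⟩
    exact exists_ne_zero_of_inf_range_ne_bot hg hM hF ι hι ψ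
      (hess _ (LinearMap.range_eq_bot.not.2 hψ))

theorem stmt18 {R S : Type u} [Ring R] [Ring S] (f : R →+* S)
    (hf : Function.Surjective f)
    -- `F` is an indecomposable injective right `S`-module:
    {F : Type u} [AddCommGroup F] [Module Sᵐᵒᵖ F]
    (hFind : IsIndecomposable Sᵐᵒᵖ F) (hFinj : Module.Injective Sᵐᵒᵖ F)
    -- `F` viewed as a right `R`-module by restriction of scalars along `f`:
    [Module Rᵐᵒᵖ F] (hresF : ∀ (r : R) (x : F), (op r : Rᵐᵒᵖ) • x = (op (f r) : Sᵐᵒᵖ) • x)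
    -- `E` is an injective right `R`-module containing `F` as an essential submodule:
    {E : Type u} [AddCommGroup E] [Module Rᵐᵒᵖ E] (hEinj : Module.Injective Rᵐᵒᵖ E)
    (ι : F →ₗ[Rᵐᵒᵖ] E) (hι : Function.Injective ι)
    (hess : IsEssentialSubmodule (LinearMap.range ι))
    -- `M` is a right `S`-module, also viewed as a right `R`-module along `f`:
    (M : Type u) [AddCommGroup M] [Module Sᵐᵒᵖ M]
    [Module Rᵐᵒᵖ M] (hresM : ∀ (r : R) (x : M), (op r : Rᵐᵒᵖ) • x = (op (f r) : Sᵐᵒᵖ) • x) :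
    (∃ φ : M →ₗ[Sᵐᵒᵖ] F, φ ≠ 0) ↔ (∃ ψ : M →ₗ[Rᵐᵒᵖ] E, ψ ≠ 0) :=
  stmt18_general f hf hFinj hresF ι hι hess M hresM
end

section
/- Let R be a right noetherian ring, z a central element of R, and S = R/zR the quotient ring by the two-sided ideal generated by z. Let F be an indecomposable injective right S-module and let E be an injective right R-module containing F (viewed as an R-module by restriction of scalars along the quotient map) as an essential submodule. Then for every finitely generated right R-module M: Hom_R(M, E) ≠ 0 if and only if Hom_S(M/Mz, F) ≠ 0, where M/Mz carries its natural right S-module structure. (This is the continuity of the induced map f* : injspec(S) → injspec(R): the preimage of the basic closed set (M) is the basic closed set (M ⊗_R S).) -/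
/-
If `ψ : Q → F` is a nonzero `S`-linear map, then `ι ∘ ψ ∘ π` is a nonzero `R`-linear map `M → E`.
Conversely, since `R` is right noetherian and `z` kills the essential submodule `F`, every
element of `E` is killed by a power of `z`: the annihilators of `e, ze, z²e, …` stabilise, and
then essentiality forces `zⁿe = 0`. As `M` is finitely generated, some `z^N` kills the image of a
nonzero `φ : M → E`, and for the largest `k` with `zᵏφ ≠ 0` the map `zᵏφ` kills `Mz`, so it
factors through `Q = M/Mz`. Its restriction to the preimage of `F` is nonzero by essentiality,
is `S`-linear because `R → S` is onto, and extends to `Q` because `F` is an injective `S`-module.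
-/

open MulOpposite

universe u

namespace Module.End

variable {A V : Type*} [Ring A] [AddCommGroup V] [Module A V]

theorem exists_pow_apply_eq_zero_of_isEssential [IsNoetherian A A] (T : Module.End A V)
    {U : Submodule A V} (hU : IsEssentialSubmodule U) (hUT : U ≤ LinearMap.ker T) (v : V) :
    ∃ n, (T ^ n) v = 0 := by
  have mono : Monotone fun n => Ideal.torsionOf A V ((T ^ n) v) :=
    monotone_nat_of_le_succ fun n a ha => by
      rw [Ideal.mem_torsionOf_iff] at ha ⊢
      rw [pow_succ', mul_apply, ← map_smul, ha, map_zero]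
  obtain ⟨n, hn⟩ := monotone_stabilizes_iff_noetherian.mpr inferInstance ⟨_, mono⟩
  refine ⟨n, by_contra fun hne => ?_⟩
  obtain ⟨x, hx, hx0⟩ := (Submodule.ne_bot_iff _).mp
    (hU _ (by rwa [Ne, Submodule.span_singleton_eq_bot]))
  obtain ⟨hxv, hxU⟩ := Submodule.mem_inf.mp hx
  obtain ⟨a, rfl⟩ := Submodule.mem_span_singleton.mp hxv
  have ha : a ∈ Ideal.torsionOf A V ((T ^ (n + 1)) v) := by
    rw [Ideal.mem_torsionOf_iff, pow_succ', mul_apply, ← map_smul]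
    exact hUT hxU
  have hstab : Ideal.torsionOf A V ((T ^ (n + 1)) v) = Ideal.torsionOf A V ((T ^ n) v) :=
    (hn _ n.le_succ).symm
  rw [hstab, Ideal.mem_torsionOf_iff] at ha
  exact hx0 ha

theorem exists_le_ker_pow_of_fg (T : Module.End A V) {p : Submodule A V} (hp : p.FG)
    (h : ∀ x ∈ p, ∃ n, (T ^ n) x = 0) : ∃ n, p ≤ LinearMap.ker (T ^ n) := by
  have mono := (LinearMap.iterateKer T).monotone
  have hle : p ≤ ⨆ n, LinearMap.ker (T ^ n) := fun x hx =>
    (Submodule.mem_iSup_of_directed _ mono.directed_le).mpr (h x hx)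
  obtain ⟨s, hs⟩ := CompleteLattice.IsCompactElement.exists_finset_of_le_iSup
    (hk := (Submodule.fg_iff_compact p).mp hp) (h := hle)
  exact ⟨s.sup id, hs.trans (iSup₂_le fun n hn => mono (Finset.le_sup (f := id) hn))⟩

theorem exists_ne_zero_comp_eq_zero_of_pow_comp_eq_zero {M : Type*} [AddCommGroup M]
    [Module A M] (T : Module.End A V) {φ : M →ₗ[A] V} (hφ : φ ≠ 0) {N : ℕ}
    (hN : (T ^ N) ∘ₗ φ = 0) : ∃ ψ : M →ₗ[A] V, ψ ≠ 0 ∧ T ∘ₗ ψ = 0 := by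
  induction N generalizing φ with
  | zero =>
    rw [pow_zero, one_eq_id, LinearMap.id_comp] at hN
    exact absurd hN hφ
  | succ N ih =>
    by_cases hT : T ∘ₗ φ = 0
    · exact ⟨φ, hφ, hT⟩
    · exact ih hT (by rwa [pow_succ, mul_eq_comp, LinearMap.comp_assoc] at hN)

theorem exists_ne_zero_comp_eq_zero_of_isEssential [IsNoetherian A A] {M : Type*}
    [AddCommGroup M] [Module A M] [Module.Finite A M] (T : Module.End A V)
    {U : Submodule A V} (hU : IsEssentialSubmodule U) (hUT : U ≤ LinearMap.ker T)
    {φ : M →ₗ[A] V} (hφ : φ ≠ 0) : ∃ ψ : M →ₗ[A] V, ψ ≠ 0 ∧ T ∘ₗ ψ = 0 := by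
  obtain ⟨N, hN⟩ := T.exists_le_ker_pow_of_fg
    (Module.Finite.iff_fg.mp inferInstance : (LinearMap.range φ).FG)
    fun _ _ => T.exists_pow_apply_eq_zero_of_isEssential hU hUT _
  exact T.exists_ne_zero_comp_eq_zero_of_pow_comp_eq_zero hφ (LinearMap.range_le_ker_iff.mp hN)

end Module.End

namespace LinearMap

theorem exists_ne_zero_of_ker_le {A M Q E : Type*} [Ring A] [AddCommGroup M] [Module A M]
    [AddCommGroup Q] [Module A Q] [AddCommGroup E] [Module A E] {π : M →ₗ[A] Q}
    (hπ : Function.Surjective π) {ψ : M →ₗ[A] E} (hψ : ψ ≠ 0) (h : ker π ≤ ker ψ) :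
    ∃ χ : Q →ₗ[A] E, χ ≠ 0 := by
  refine ⟨(ker π).liftQ ψ h ∘ₗ (π.quotKerEquivOfSurjective hπ).symm, fun h0 => hψ ?_⟩
  ext m
  simpa using congr($h0 (π m))

variable {A B : Type*} [Ring A] [Ring B] (f : A →+* B)

section

variable {V W : Type*} [AddCommGroup V] [Module A V] [Module B V] [AddCommGroup W] [Module A W]
  [Module B W]

def restrictScalarsAlong_s19 (hV : ∀ (a : A) (x : V), a • x = f a • x)
    (hW : ∀ (a : A) (x : W), a • x = f a • x) (ψ : V →ₗ[B] W) : V →ₗ[A] W where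
  toFun := ψ
  map_add' := map_add ψ
  map_smul' a x := by rw [hV, hW, map_smul]; rfl

end

variable {f} {V W : Type u} [AddCommGroup V] [Module A V] [Module B V] [AddCommGroup W]
  [Module A W] [Module B W]

theorem exists_extension_of_injective [Module.Injective B W] (hf : Function.Surjective f)
    (hV : ∀ (a : A) (x : V), a • x = f a • x) (hW : ∀ (a : A) (x : W), a • x = f a • x)
    (p : Submodule A V) (χ : p →ₗ[A] W) : ∃ ψ : V →ₗ[B] W, ∀ x : p, ψ x = χ x := by
  let p' : Submodule B V :=
    { carrier := p
      add_mem' := p.add_mem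
      zero_mem' := p.zero_mem
      smul_mem' := fun b x hx => by
        obtain ⟨a, rfl⟩ := hf b
        rw [← hV]
        exact p.smul_mem a hx }
  let χ' : p' →ₗ[B] W :=
    { toFun := fun x => χ ⟨x, x.2⟩
      map_add' := fun x y => map_add χ ⟨x, x.2⟩ ⟨y, y.2⟩
      map_smul' := fun b x => by
        obtain ⟨a, rfl⟩ := hf b
        have hax : (⟨(f a • x : p'), (f a • x).2⟩ : p) = a • ⟨x, x.2⟩ :=
          Subtype.ext (hV a x).symm
        rw [RingHom.id_apply, hax, map_smul, hW] }
  obtain ⟨ψ, hψ⟩ := Module.Injective.out p'.subtype p'.injective_subtype χ'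
  exact ⟨ψ, fun x => hψ ⟨x, x.2⟩⟩

theorem exists_ne_zero_of_isEssential [Module.Injective B W] (hf : Function.Surjective f)
    (hV : ∀ (a : A) (x : V), a • x = f a • x) (hW : ∀ (a : A) (x : W), a • x = f a • x)
    {E : Type*} [AddCommGroup E] [Module A E] {ι : W →ₗ[A] E} (hι : Function.Injective ι)
    (hess : IsEssentialSubmodule (range ι)) {χ : V →ₗ[A] E} (hχ : χ ≠ 0) :
    ∃ ψ : V →ₗ[B] W, ψ ≠ 0 := by
  let K := (range ι).comap χ
  let χK : K →ₗ[A] W := (LinearEquiv.ofInjective ι hι).symm ∘ₗ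
    χ.restrict (p := K) (q := range ι) fun _ hx => hx
  have hχK : ∀ x, ι (χK x) = χ x := fun x =>
    congrArg Subtype.val ((LinearEquiv.ofInjective ι hι).apply_symm_apply _)
  have hK : K.map χ ≠ ⊥ := by
    rw [Submodule.map_comap_eq]
    exact hess _ (range_eq_bot.not.mpr hχ)
  obtain ⟨_, ⟨x, hxK, rfl⟩, hx0⟩ := (Submodule.ne_bot_iff _).mp hK
  obtain ⟨ψ, hψ⟩ := exists_extension_of_injective hf hV hW K χK
  refine ⟨ψ, fun h => hx0 ?_⟩
  rw [← hχK ⟨x, hxK⟩, ← hψ, h, zero_apply, map_zero]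

end LinearMap

theorem stmt19_general {R S : Type u} [Ring R] [Ring S] [IsNoetherian Rᵐᵒᵖ R]
    (z : R) (hz : z ∈ Set.center R)
    -- `S = R/zR`, presented as a surjective ring homomorphism with kernel `zR`:
    (g : R →+* S) (hg : Function.Surjective g)
    (hker : ∀ r : R, g r = 0 ↔ ∃ a : R, r = z * a)
    -- `F` is an indecomposable injective right `S`-module:
    {F : Type u} [AddCommGroup F] [Module Sᵐᵒᵖ F]
    (hFinj : Module.Injective Sᵐᵒᵖ F)
    -- `F` viewed as a right `R`-module by restriction of scalars along `g`:
    [Module Rᵐᵒᵖ F] (hresF : ∀ (r : R) (x : F), (op r : Rᵐᵒᵖ) • x = (op (g r) : Sᵐᵒᵖ) • x)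
    -- `E` is an injective right `R`-module containing `F` as an essential submodule:
    {E : Type u} [AddCommGroup E] [Module Rᵐᵒᵖ E]
    (ι : F →ₗ[Rᵐᵒᵖ] E) (hι : Function.Injective ι)
    (hess : IsEssentialSubmodule (LinearMap.range ι))
    -- `M` is a finitely generated right `R`-module:
    (M : Type u) [AddCommGroup M] [Module Rᵐᵒᵖ M] (hMfg : Module.Finite Rᵐᵒᵖ M)
    -- `Q = M/Mz` with its natural right `S`-module structure, presented as a
    -- surjective `R`-linear map `π : M → Q` whose kernel is `Mz`:
    (Q : Type u) [AddCommGroup Q] [Module Sᵐᵒᵖ Q]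
    [Module Rᵐᵒᵖ Q] (hresQ : ∀ (r : R) (x : Q), (op r : Rᵐᵒᵖ) • x = (op (g r) : Sᵐᵒᵖ) • x)
    (π : M →ₗ[Rᵐᵒᵖ] Q) (hπ : Function.Surjective π)
    (hkerπ : ∀ m : M, π m = 0 ↔ ∃ m' : M, m = (op z : Rᵐᵒᵖ) • m') :
    (∃ φ : M →ₗ[Rᵐᵒᵖ] E, φ ≠ 0) ↔ (∃ ψ : Q →ₗ[Sᵐᵒᵖ] F, ψ ≠ 0) := by
  have hF : ∀ (a : Rᵐᵒᵖ) (x : F), a • x = g.op a • x := fun a => hresF a.unop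
  have hQ : ∀ (a : Rᵐᵒᵖ) (x : Q), a • x = g.op a • x := fun a => hresQ a.unop
  constructor
  · rintro ⟨φ, hφ⟩
    have : IsNoetherian Rᵐᵒᵖ Rᵐᵒᵖ :=
      isNoetherian_of_linearEquiv (MulOpposite.opLinearEquiv Rᵐᵒᵖ)
    let T : Module.End Rᵐᵒᵖ E := .smulLeft (op z) (op_mem_center_iff.mpr hz)
    have hιT : LinearMap.range ι ≤ LinearMap.ker T := by
      rintro _ ⟨x, rfl⟩
      rw [LinearMap.mem_ker, Module.End.smulLeft_apply, ← map_smul, hresF,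
        (hker z).mpr ⟨1, (mul_one z).symm⟩, op_zero, zero_smul, map_zero]
    obtain ⟨ψ, hψ, hTψ⟩ := T.exists_ne_zero_comp_eq_zero_of_isEssential hess hιT hφ
    have hψπ : LinearMap.ker π ≤ LinearMap.ker ψ := fun m hm => by
      obtain ⟨m', rfl⟩ := (hkerπ m).mp hm
      rw [LinearMap.mem_ker, map_smul]
      exact congr($hTψ m')
    obtain ⟨χ, hχ⟩ := LinearMap.exists_ne_zero_of_ker_le hπ hψ hψπ
    have hgop : Function.Surjective g.op := fun b =>
      let ⟨r, hr⟩ := hg b.unop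
      ⟨op r, congrArg op hr⟩
    exact LinearMap.exists_ne_zero_of_isEssential hgop hQ hF hι hess hχ
  · rintro ⟨ψ, hψ⟩
    obtain ⟨q, hq⟩ : ∃ q, ψ q ≠ 0 := by
      by_contra! h
      exact hψ (LinearMap.ext h)
    obtain ⟨m, rfl⟩ := hπ q
    refine ⟨ι ∘ₗ ψ.restrictScalarsAlong_s19 g.op hQ hF ∘ₗ π, fun h => hq (hι ?_)⟩
    rw [map_zero]
    exact congr($h m)

theorem stmt19 {R S : Type u} [Ring R] [Ring S] [IsNoetherian Rᵐᵒᵖ R]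
    (z : R) (hz : z ∈ Set.center R)
    -- `S = R/zR`, presented as a surjective ring homomorphism with kernel `zR`:
    (g : R →+* S) (hg : Function.Surjective g)
    (hker : ∀ r : R, g r = 0 ↔ ∃ a : R, r = z * a)
    -- `F` is an indecomposable injective right `S`-module:
    {F : Type u} [AddCommGroup F] [Module Sᵐᵒᵖ F]
    (hFind : IsIndecomposable Sᵐᵒᵖ F) (hFinj : Module.Injective Sᵐᵒᵖ F)
    -- `F` viewed as a right `R`-module by restriction of scalars along `g`:
    [Module Rᵐᵒᵖ F] (hresF : ∀ (r : R) (x : F), (op r : Rᵐᵒᵖ) • x = (op (g r) : Sᵐᵒᵖ) • x)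
    -- `E` is an injective right `R`-module containing `F` as an essential submodule:
    {E : Type u} [AddCommGroup E] [Module Rᵐᵒᵖ E] (hEinj : Module.Injective Rᵐᵒᵖ E)
    (ι : F →ₗ[Rᵐᵒᵖ] E) (hι : Function.Injective ι)
    (hess : IsEssentialSubmodule (LinearMap.range ι))
    -- `M` is a finitely generated right `R`-module:
    (M : Type u) [AddCommGroup M] [Module Rᵐᵒᵖ M] (hMfg : Module.Finite Rᵐᵒᵖ M)
    -- `Q = M/Mz` with its natural right `S`-module structure, presented as a
    -- surjective `R`-linear map `π : M → Q` whose kernel is `Mz`: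
    (Q : Type u) [AddCommGroup Q] [Module Sᵐᵒᵖ Q]
    [Module Rᵐᵒᵖ Q] (hresQ : ∀ (r : R) (x : Q), (op r : Rᵐᵒᵖ) • x = (op (g r) : Sᵐᵒᵖ) • x)
    (π : M →ₗ[Rᵐᵒᵖ] Q) (hπ : Function.Surjective π)
    (hkerπ : ∀ m : M, π m = 0 ↔ ∃ m' : M, m = (op z : Rᵐᵒᵖ) • m') :
    (∃ φ : M →ₗ[Rᵐᵒᵖ] E, φ ≠ 0) ↔ (∃ ψ : Q →ₗ[Sᵐᵒᵖ] F, ψ ≠ 0) :=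
  stmt19_general z hz g hg hker hFinj hresF ι hι hess M hMfg Q hresQ π hπ hkerπ
end
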